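/- arXiv:0808.3439 — 2 statements merged into one kernel-verified Lean document; each statement's English description precedes it below -/
import Mathlib

section
/- The pairing vanishes on relations in the first argument: ⟨⟨β, α⟩⟩ = 0 for every β ∈ I_n and every α ∈ Θ_n. -/
/-
Formalization of definitions and a statement from:
"Combinatorial bases for multilinear parts of free algebras with double compatible brackets"
(Fu Liu).  The alphabet X = {x_1 < ... < x_n} is identified with Fin n.
-/

noncomputable section
namespace LiuPaper

attribute [local instance] Classical.propDecidable

/-- The two colors used throughout: red and blue. -/
inductive Col : Type
  | red | blue
  deriving DecidableEq

/-! ### Two-colored graphs on `Fin n` -/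

/-- A two-colored graph on the vertex set `Fin n`: each unordered pair of vertices either
carries no edge (`none`) or an edge colored red or blue. -/
abbrev TCGraph (n : ℕ) : Type := Sym2 (Fin n) → Option Col

/-- No loops: the diagonal pairs carry no edge. -/
def Loopless {n : ℕ} (G : TCGraph n) : Prop := ∀ v : Fin n, G (Sym2.diag v) = none

/-- The underlying (uncolored) simple graph of a two-colored graph. -/
def toSG {n : ℕ} (G : TCGraph n) : SimpleGraph (Fin n) where
  Adj i j := i ≠ j ∧ G s(i, j) ≠ none
  symm := ⟨by
    intro i j hij
    refine ⟨hij.1.symm, ?_⟩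
    rw [Sym2.eq_swap]
    exact hij.2⟩
  loopless := ⟨fun v hv => hv.1 rfl⟩

/-- Pattern `1r3r2`: there are `i < j < k` with `{i,k}` and `{j,k}` both red. -/
def Pat1r3r2 {n : ℕ} (G : TCGraph n) : Prop :=
  ∃ i j k : Fin n, i < j ∧ j < k ∧ G s(i, k) = some Col.red ∧ G s(j, k) = some Col.red

/-- Pattern `2b1b3`: there are `i < j < k` with `{i,j}` and `{i,k}` both blue. -/
def Pat2b1b3 {n : ℕ} (G : TCGraph n) : Prop :=
  ∃ i j k : Fin n, i < j ∧ j < k ∧ G s(i, j) = some Col.blue ∧ G s(i, k) = some Col.blue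

/-- Pattern `1r2b3`: there are `i < j < k` with `{i,j}` red and `{j,k}` blue. -/
def Pat1r2b3 {n : ℕ} (G : TCGraph n) : Prop :=
  ∃ i j k : Fin n, i < j ∧ j < k ∧ G s(i, j) = some Col.red ∧ G s(j, k) = some Col.blue

/-- `𝒢̄_n`: the set of two-colored trees on `X` avoiding the patterns
`1r3r2`, `2b1b3` and `1r2b3`. -/
def Gbar (n : ℕ) : Set (TCGraph n) :=
  {G | Loopless G ∧ (toSG G).IsTree ∧ ¬Pat1r3r2 G ∧ ¬Pat2b1b3 G ∧ ¬Pat1r2b3 G}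

/-! ### Rooted trees on `Fin n` -/

/-- A rooted tree on `X = Fin n`: a tree together with a distinguished root. -/
structure RootedTree (n : ℕ) where
  graph : SimpleGraph (Fin n)
  isTree : graph.IsTree
  root : Fin n

/-- `i` is the parent of `j` in the rooted tree `T`:
they are adjacent and `i` is closer to the root. -/
def ParentOf {n : ℕ} (T : RootedTree n) (i j : Fin n) : Prop :=
  T.graph.Adj i j ∧ T.graph.dist T.root i + 1 = T.graph.dist T.root j

/-- The color map `c`: color the increasing edges (parent < child) of a rooted tree red and
the decreasing edges blue. -/
def colorMap {n : ℕ} (T : RootedTree n) : TCGraph n :=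
  Sym2.lift ⟨fun i j =>
    if T.graph.Adj i j then
      (if (ParentOf T i j ∧ i < j) ∨ (ParentOf T j i ∧ j < i) then some Col.red
       else some Col.blue)
    else none,
    by
      intro i j
      dsimp only
      by_cases h : T.graph.Adj i j
      · rw [if_pos h, if_pos h.symm]
        by_cases h2 : (ParentOf T i j ∧ i < j) ∨ (ParentOf T j i ∧ j < i)
        · rw [if_pos h2, if_pos (Or.symm h2)]
        · rw [if_neg h2, if_neg (fun h2' => h2 (Or.symm h2'))]
      · rw [if_neg h, if_neg (fun h' => h (h'.symm))]⟩

/-- The number of increasing edges (counted as ordered pairs (parent, child) with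
parent < child) of a rooted tree. -/
def incCount {n : ℕ} (T : RootedTree n) : ℕ :=
  (Finset.univ.filter (fun p : Fin n × Fin n => ParentOf T p.1 p.2 ∧ p.1 < p.2)).card

/-- `a(n,i)`: the number of rooted trees on `{1, …, n}` with exactly `i` increasing edges. -/
def numRT (n i : ℕ) : ℕ := Nat.card {T : RootedTree n // incCount T = i}

/-! ### 2v-colored binary trees, `Θ_n`, `J_n` and `Lie₂(n)` -/

/-- A 2v-colored binary tree with leaves labeled by elements of `Fin n`:
internal vertices are colored red (the bracket `[.,.]`) or blue (the bracket `⟨.,.⟩`). -/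
inductive CBT (n : ℕ) : Type
  | leaf : Fin n → CBT n
  | node : Col → CBT n → CBT n → CBT n
  deriving DecidableEq

/-- The list of leaf labels of a 2v-colored binary tree, from left to right. -/
def leavesCBT {n : ℕ} : CBT n → List (Fin n)
  | .leaf x => [x]
  | .node _ l r => leavesCBT l ++ leavesCBT r

/-- A tree is multilinear when its leaves are labeled bijectively by `Fin n`. -/
def Multilinear {n : ℕ} (t : CBT n) : Prop :=
  (leavesCBT t).Nodup ∧ ∀ x : Fin n, x ∈ leavesCBT t

/-- `ℬ𝒯_n`: 2v-colored binary trees whose leaves are labeled bijectively by `X = Fin n`. -/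
def BT (n : ℕ) : Type := {t : CBT n // Multilinear t}

/-- A one-hole context for 2v-colored binary trees. -/
inductive Ctx (n : ℕ) : Type
  | hole : Ctx n
  | nodeL : Col → Ctx n → CBT n → Ctx n
  | nodeR : Col → CBT n → Ctx n → Ctx n

/-- Filling the hole of a context with a tree. -/
def fillCtx {n : ℕ} : Ctx n → CBT n → CBT n
  | .hole, t => t
  | .nodeL c C r, t => .node c (fillCtx C t) r
  | .nodeR c l C, t => .node c l (fillCtx C t)

variable (R : Type*) [CommRing R]

/-- `Θ_n`: the free `R`-module on `ℬ𝒯_n`. -/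
abbrev Theta (n : ℕ) : Type _ := BT n →₀ R

/-- Symmetry combinations: `T₁ + T₂` where `T₂` is obtained from `T₁` by swapping the left and
right subtrees at one internal vertex. -/
def symCombs (n : ℕ) : Set (Theta R n) :=
  {x | ∃ (T₁ T₂ : BT n) (C : Ctx n) (c : Col) (a b : CBT n),
    T₁.1 = fillCtx C (.node c a b) ∧ T₂.1 = fillCtx C (.node c b a) ∧
    x = Finsupp.single T₁ 1 + Finsupp.single T₂ 1}

/-- Jacobi combinations: `T₁ + T₂ + T₃` where at some subtree of `T₁`, the root and the right
child of the root have the same color, and `T₂`, `T₃` are obtained by cyclic rotation of the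
three constituent subtrees. -/
def jacCombs (n : ℕ) : Set (Theta R n) :=
  {x | ∃ (T₁ T₂ T₃ : BT n) (C : Ctx n) (c : Col) (A B D : CBT n),
    T₁.1 = fillCtx C (.node c A (.node c B D)) ∧
    T₂.1 = fillCtx C (.node c B (.node c D A)) ∧
    T₃.1 = fillCtx C (.node c D (.node c A B)) ∧
    x = Finsupp.single T₁ 1 + Finsupp.single T₂ 1 + Finsupp.single T₃ 1}

/-- Mixed Jacobi combinations: the sum of six trees, obtained from two copies of a red Jacobi
combination by recoloring from red to blue the right child of the root of each involved subtree
in the first copy, and the root of each involved subtree in the second copy. -/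
def mixCombs (n : ℕ) : Set (Theta R n) :=
  {x | ∃ (T₁ T₂ T₃ T₄ T₅ T₆ : BT n) (C : Ctx n) (A B D : CBT n),
    T₁.1 = fillCtx C (.node .red A (.node .blue B D)) ∧
    T₂.1 = fillCtx C (.node .red B (.node .blue D A)) ∧
    T₃.1 = fillCtx C (.node .red D (.node .blue A B)) ∧
    T₄.1 = fillCtx C (.node .blue A (.node .red B D)) ∧
    T₅.1 = fillCtx C (.node .blue B (.node .red D A)) ∧
    T₆.1 = fillCtx C (.node .blue D (.node .red A B)) ∧
    x = Finsupp.single T₁ 1 + Finsupp.single T₂ 1 + Finsupp.single T₃ 1 +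
        Finsupp.single T₄ 1 + Finsupp.single T₅ 1 + Finsupp.single T₆ 1}

/-- `J_n ⊆ Θ_n`: the submodule generated by symmetry, Jacobi, and mixed Jacobi combinations. -/
def Jn (n : ℕ) : Submodule R (Theta R n) :=
  Submodule.span R (symCombs R n ∪ jacCombs R n ∪ mixCombs R n)

/-- `Lie₂(n) = Θ_n / J_n`, the multilinear part of the free Lie algebra on `X` with two
compatible brackets. -/
abbrev Lie2 (n : ℕ) : Type _ := Theta R n ⧸ Jn R n

/-! ### Oriented two-colored graphs, `Γ_n`, `I_n` and `Eil₂(n)` -/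

/-- An oriented two-colored graph on `Fin n`: each ordered pair of distinct vertices either
carries no edge or a directed edge colored red or blue. -/
structure OGraph (n : ℕ) where
  dir : Fin n → Fin n → Option Col
  loopless : ∀ v : Fin n, dir v v = none

/-- The underlying undirected simple graph of an oriented two-colored graph. -/
def toSGO {n : ℕ} (G : OGraph n) : SimpleGraph (Fin n) where
  Adj i j := i ≠ j ∧ (G.dir i j ≠ none ∨ G.dir j i ≠ none)
  symm := ⟨by rintro i j ⟨h1, h2⟩; exact ⟨h1.symm, h2.symm⟩⟩
  loopless := ⟨fun v hv => hv.1 rfl⟩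

/-- The graph has at most one edge between any two vertices. -/
def NoMulti {n : ℕ} (G : OGraph n) : Prop := ∀ i j : Fin n, G.dir i j = none ∨ G.dir j i = none

/-- An oriented two-colored graph is a tree on `X` when it is connected and its underlying
undirected (multi)graph is acyclic. -/
def IsOTree {n : ℕ} (G : OGraph n) : Prop := (toSGO G).IsTree ∧ NoMulti G

/-- `Γ_n`: the free `R`-module on the oriented two-colored graphs. -/
abbrev Gamma (n : ℕ) : Type _ := OGraph n →₀ R

/-- Generators of `I_n`: disconnected graphs. -/
def disconnSet (n : ℕ) : Set (Gamma R n) :=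
  {x | ∃ G : OGraph n, ¬(toSGO G).Connected ∧ x = Finsupp.single G 1}

/-- Generators of `I_n`: graphs with more than one edge between some pair of vertices. -/
def multiSet (n : ℕ) : Set (Gamma R n) :=
  {x | ∃ G : OGraph n, (∃ i j : Fin n, G.dir i j ≠ none ∧ G.dir j i ≠ none) ∧
    x = Finsupp.single G 1}

/-- Symmetry combinations in `Γ_n`: `G₁ + G₂` where `G₂` reverses one edge of `G₁`. -/
def symOSet (n : ℕ) : Set (Gamma R n) :=
  {x | ∃ (G₁ G₂ : OGraph n) (i j : Fin n) (c : Col),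
    G₁.dir i j = some c ∧ G₁.dir j i = none ∧
    G₂.dir i j = none ∧ G₂.dir j i = some c ∧
    (∀ p q : Fin n, ¬((p = i ∧ q = j) ∨ (p = j ∧ q = i)) → G₂.dir p q = G₁.dir p q) ∧
    x = Finsupp.single G₁ 1 + Finsupp.single G₂ 1}

/-- `Tri G i j k c₁ c₂`: within the triangle `{i,j,k}`, `G` has exactly the two edges
`i → j` (colored `c₁`) and `j → k` (colored `c₂`). -/
def Tri {n : ℕ} (G : OGraph n) (i j k : Fin n) (c₁ c₂ : Col) : Prop :=
  G.dir i j = some c₁ ∧ G.dir j k = some c₂ ∧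
  G.dir j i = none ∧ G.dir k j = none ∧ G.dir i k = none ∧ G.dir k i = none

/-- `(p,q)` is an ordered pair not supported on the unordered pairs
`{i,j}`, `{j,k}`, `{k,i}`. -/
def OffTri {n : ℕ} (i j k p q : Fin n) : Prop :=
  ¬((p = i ∧ q = j) ∨ (p = j ∧ q = i) ∨ (p = j ∧ q = k) ∨ (p = k ∧ q = j) ∨
    (p = k ∧ q = i) ∨ (p = i ∧ q = k))

/-- Jacobi combinations in `Γ_n`: `G₁ + G₂ + G₃` agreeing outside a two-edge same-colored
subgraph `{i→j, j→k}` whose subgraphs in `G₂`, `G₃` are the cyclic rotations of `i,j,k`. -/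
def jacOSet (n : ℕ) : Set (Gamma R n) :=
  {x | ∃ (G₁ G₂ G₃ : OGraph n) (i j k : Fin n) (c : Col),
    i ≠ j ∧ j ≠ k ∧ i ≠ k ∧
    Tri G₁ i j k c c ∧ Tri G₂ j k i c c ∧ Tri G₃ k i j c c ∧
    (∀ p q : Fin n, OffTri i j k p q →
      G₂.dir p q = G₁.dir p q ∧ G₃.dir p q = G₁.dir p q) ∧
    x = Finsupp.single G₁ 1 + Finsupp.single G₂ 1 + Finsupp.single G₃ 1}

/-- Mixed Jacobi combinations in `Γ_n`: obtained from two copies of a red Jacobi combination by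
recoloring from red to blue one edge of the two-edge subgraph in the first copy and the other
edge in the second copy. -/
def mixOSet (n : ℕ) : Set (Gamma R n) :=
  {x | ∃ (G₁ G₂ G₃ G₄ G₅ G₆ : OGraph n) (i j k : Fin n),
    i ≠ j ∧ j ≠ k ∧ i ≠ k ∧
    Tri G₁ i j k Col.red Col.blue ∧ Tri G₂ j k i Col.red Col.blue ∧
    Tri G₃ k i j Col.red Col.blue ∧
    Tri G₄ i j k Col.blue Col.red ∧ Tri G₅ j k i Col.blue Col.red ∧
    Tri G₆ k i j Col.blue Col.red ∧
    (∀ p q : Fin n, OffTri i j k p q →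
      G₂.dir p q = G₁.dir p q ∧ G₃.dir p q = G₁.dir p q ∧ G₄.dir p q = G₁.dir p q ∧
      G₅.dir p q = G₁.dir p q ∧ G₆.dir p q = G₁.dir p q) ∧
    x = Finsupp.single G₁ 1 + Finsupp.single G₂ 1 + Finsupp.single G₃ 1 +
        Finsupp.single G₄ 1 + Finsupp.single G₅ 1 + Finsupp.single G₆ 1}

/-- `I_n ⊆ Γ_n`: the submodule generated by disconnected graphs, graphs with multiple edges,
symmetry combinations, Jacobi combinations and mixed Jacobi combinations. -/
def In (n : ℕ) : Submodule R (Gamma R n) :=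
  Submodule.span R (disconnSet R n ∪ multiSet R n ∪ symOSet R n ∪ jacOSet R n ∪ mixOSet R n)

/-- `Eil₂(n) = Γ_n / I_n`. -/
abbrev Eil2 (n : ℕ) : Type _ := Gamma R n ⧸ In R n

/-- The consistent orientation `o_G` of a two-colored graph: a red edge `{i,j}` with `i<j`
is oriented `i → j`, a blue one `j → i`. -/
def orient {n : ℕ} (G : TCGraph n) : OGraph n where
  dir i j :=
    if i < j then (if G s(i, j) = some Col.red then some Col.red else none)
    else if j < i then (if G s(i, j) = some Col.blue then some Col.blue else none)
    else none
  loopless := by intro v; simp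

/-! ### The pairing `⟨⟨ , ⟩⟩` between `Γ_n` and `Θ_n` -/

/-- The position (path from the root; `false` = go left, `true` = go right) of the leaf
labeled `x` in a binary tree, if any. -/
def posIn {n : ℕ} : CBT n → Fin n → Option (List Bool)
  | .leaf y, x => if x = y then some [] else none
  | .node _ l r, x =>
      match posIn l x with
      | some p => some (false :: p)
      | none => (posIn r x).map (fun p => true :: p)

/-- The color of the internal vertex of `T` at position `p`, if `p` is the position of an
internal vertex. -/
def nodeColAt {n : ℕ} : CBT n → List Bool → Option Col
  | .node c _ _, [] => some c
  | .node _ l _, false :: p => nodeColAt l p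
  | .node _ _ r, true :: p => nodeColAt r p
  | .leaf _, _ => none

/-- The list of positions of internal vertices of a binary tree. -/
def internalPos {n : ℕ} : CBT n → List (List Bool)
  | .leaf _ => []
  | .node _ l r =>
      [] :: ((internalPos l).map (fun p => false :: p) ++
             (internalPos r).map (fun p => true :: p))

/-- Longest common prefix of two paths. -/
def lcp : List Bool → List Bool → List Bool
  | a :: p, b :: q => if a = b then a :: lcp p q else []
  | _, _ => []

/-- The nadir `β_{G,T}(e)` of the path in `T` between the leaves `i` and `j`: the vertex of the
path closest to the root, i.e. the longest common prefix of the two leaf positions. -/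
def nadir {n : ℕ} (T : CBT n) (i j : Fin n) : List Bool :=
  lcp ((posIn T i).getD []) ((posIn T j).getD [])

/-- The path from leaf `i` to leaf `j` travels counterclockwise at its nadir:
leaf `i` lies in the right subtree and leaf `j` in the left subtree of the nadir. -/
def Ccw {n : ℕ} (T : CBT n) (i j : Fin n) : Prop :=
  ∃ s p q : List Bool, posIn T i = some (s ++ true :: p) ∧ posIn T j = some (s ++ false :: q)

/-- `β_{G,T}` is a color-preserving bijection from the edges of `G` onto the internal
vertices of `T`. -/
def IsCPB {n : ℕ} (G : OGraph n) (T : CBT n) : Prop :=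
  Set.BijOn (fun e : Fin n × Fin n => nadir T e.1 e.2)
    {e : Fin n × Fin n | G.dir e.1 e.2 ≠ none} {p : List Bool | p ∈ internalPos T} ∧
  ∀ i j : Fin n, G.dir i j ≠ none → nodeColAt T (nadir T i j) = G.dir i j

/-- The sign `τ_{G,T} = (-1)^N`, where `N` is the number of edges of `G` whose path in `T`
travels counterclockwise at its nadir. -/
def tauGT {n : ℕ} (G : OGraph n) (T : CBT n) : R :=
  (-1 : R) ^
    (Finset.univ.filter
      (fun e : Fin n × Fin n => G.dir e.1 e.2 ≠ none ∧ Ccw T e.1 e.2)).card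

/-- The pairing `⟨⟨G, T⟩⟩` of an oriented two-colored graph with a 2v-colored binary tree. -/
def pairGT {n : ℕ} (G : OGraph n) (T : CBT n) : R :=
  if IsCPB G T then tauGT R G T else 0

/-- The bilinear extension of `⟨⟨ , ⟩⟩` to `Γ_n × Θ_n → R`. -/
def pairing {n : ℕ} (β : Gamma R n) (α : Theta R n) : R :=
  β.sum fun G b => α.sum fun T a => b * a * pairGT R G T.1


/-!
A graph pairs nontrivially with a tree only if its edges are matched bijectively with the internal
vertices by their nadirs. Then every internal vertex joins its two subtrees by an edge, so the
graph is connected, and no two edges (e.g. `i → j` and `j → i`) share a nadir. Reversing an edge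
keeps its nadir and flips its orientation, so symmetry combinations cancel. Of three leaves
`i, j, k`, one, say `i`, branches off first: the paths `i – j` and `k – i` share their nadir and
turn at it in opposite directions. Hence in a (mixed) Jacobi combination the graphs containing
`k → i` and `i → j` vanish, and the others cancel in pairs that differ by moving the edge `i → j`
to `k → i`.
-/

lemma lcp_comm : ∀ p q : List Bool, lcp p q = lcp q p
  | [], [] | [], _ :: _ | _ :: _, [] => rfl
  | a :: p, b :: q => by
      by_cases h : a = b
      · subst h; simp [lcp, lcp_comm p q]
      · simp [lcp, h, Ne.symm h]

lemma lcp_append (s p q : List Bool) : lcp (s ++ p) (s ++ q) = s ++ lcp p q := by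
  induction s with
  | nil => rfl
  | cons a s ih => simp [lcp, ih]

lemma lcp_cons_not (a : Bool) (p q : List Bool) : lcp (a :: p) ((!a) :: q) = [] := by
  cases a <;> rfl

lemma append_cons_eq_append_cons_iff {s s' p p' : List Bool} {a a' : Bool} :
    s ++ a :: p = s' ++ a' :: p' ↔
      (s = s' ∧ a = a' ∧ p = p') ∨ (∃ u, s' = s ++ a :: u ∧ p = u ++ a' :: p') ∨
        (∃ u, s = s' ++ a' :: u ∧ p' = u ++ a :: p) := by
  rw [List.append_eq_append_iff]
  constructor
  · rintro (⟨_ | ⟨b, u⟩, rfl, h⟩ | ⟨_ | ⟨b, u⟩, rfl, h⟩)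
    · simp_all
    · simp only [List.cons_append, List.cons.injEq] at h
      exact Or.inr (Or.inl ⟨u, by rw [h.1], h.2⟩)
    · simp_all
    · simp only [List.cons_append, List.cons.injEq] at h
      exact Or.inr (Or.inr ⟨u, by rw [h.1], h.2⟩)
  · rintro (⟨rfl, rfl, rfl⟩ | ⟨u, rfl, rfl⟩ | ⟨u, rfl, rfl⟩) <;> simp

section Trees

variable {n : ℕ}

def subtreeAt : CBT n → List Bool → Option (CBT n)
  | t, [] => some t
  | .leaf _, _ :: _ => none
  | .node _ l _, false :: p => subtreeAt l p
  | .node _ _ r, true :: p => subtreeAt r p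

lemma subtreeAt_append_singleton {t t' : CBT n} {s : List Bool} (b : Bool)
    (h : subtreeAt t s = some t') : subtreeAt t (s ++ [b]) = subtreeAt t' [b] := by
  induction t generalizing s with
  | leaf y => cases s <;> simp_all [subtreeAt]
  | node c l r ihl ihr =>
      rcases s with _ | ⟨_ | _, s⟩
      · simp_all [subtreeAt]
      · exact ihl h
      · exact ihr h

lemma mem_internalPos_of_subtreeAt {t l r : CBT n} {c : Col} {s : List Bool}
    (h : subtreeAt t s = some (.node c l r)) : s ∈ internalPos t := by
  induction t generalizing s with
  | leaf y => cases s <;> simp [subtreeAt] at h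
  | node c' l' r' ihl ihr =>
      rcases s with _ | ⟨_ | _, s⟩
      · simp [internalPos]
      · simp [internalPos, ihl h]
      · simp [internalPos, ihr h]

lemma posIn_node_eq_some_cons {c : Col} {l r : CBT n} {x : Fin n} {b : Bool} {p : List Bool} :
    posIn (.node c l r) x = some (b :: p) ↔
      (b = false ∧ posIn l x = some p) ∨ (b = true ∧ posIn l x = none ∧ posIn r x = some p) := by
  simp only [posIn]
  cases posIn l x <;> cases posIn r x <;> cases b <;> simp

lemma mem_leavesCBT_iff {t : CBT n} {x : Fin n} : x ∈ leavesCBT t ↔ ∃ p, posIn t x = some p := by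
  induction t with
  | leaf y => by_cases h : x = y <;> simp [leavesCBT, posIn, h]
  | node c l r ihl ihr =>
      simp only [leavesCBT, List.mem_append, ihl, ihr, posIn]
      cases posIn l x <;> cases posIn r x <;> simp

lemma posIn_eq_some_append {t : CBT n} {x : Fin n} {s q : List Bool}
    (h : posIn t x = some (s ++ q)) : ∃ t', subtreeAt t s = some t' ∧ posIn t' x = some q := by
  induction t generalizing s with
  | leaf y => cases s <;> simp_all [subtreeAt, posIn]
  | node c l r ihl ihr =>
      rcases s with _ | ⟨b, s⟩
      · exact ⟨_, rfl, h⟩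
      · rcases posIn_node_eq_some_cons.1 h with ⟨rfl, hl⟩ | ⟨rfl, -, hr⟩
        exacts [ihl hl, ihr hr]

lemma mem_leavesCBT_child {T l r : CBT n} {c : Col} {s p : List Bool} {x : Fin n} {b : Bool}
    (hs : subtreeAt T s = some (.node c l r)) (hx : posIn T x = some (s ++ b :: p)) :
    x ∈ leavesCBT (cond b r l) := by
  obtain ⟨t', ht', hx'⟩ := posIn_eq_some_append hx
  rw [hs, Option.some.injEq] at ht'
  subst ht'
  rcases posIn_node_eq_some_cons.1 hx' with ⟨rfl, hl⟩ | ⟨rfl, -, hr⟩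
  exacts [mem_leavesCBT_iff.2 ⟨_, hl⟩, mem_leavesCBT_iff.2 ⟨_, hr⟩]

lemma exists_posIn_branch {t : CBT n} (hnd : (leavesCBT t).Nodup) {x y : Fin n} (hxy : x ≠ y)
    (hx : x ∈ leavesCBT t) (hy : y ∈ leavesCBT t) :
    ∃ s a p q, posIn t x = some (s ++ a :: p) ∧ posIn t y = some (s ++ (!a) :: q) := by
  induction t with
  | leaf z => simp_all [leavesCBT]
  | node c l r ihl ihr =>
      simp only [leavesCBT, List.nodup_append, List.mem_append] at hnd hx hy
      obtain ⟨hndl, hndr, hdisj⟩ := hnd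
      have hl : ∀ z ∈ leavesCBT r, posIn l z = none := fun z hz =>
        Option.eq_none_iff_forall_ne_some.2 fun q hq =>
          hdisj z (mem_leavesCBT_iff.2 ⟨q, hq⟩) z hz rfl
      rcases hx with hx | hx <;> rcases hy with hy | hy
      · obtain ⟨s, a, p, q, h₁, h₂⟩ := ihl hndl hx hy
        exact ⟨false :: s, a, p, q, by simp [posIn, h₁], by simp [posIn, h₂]⟩
      · obtain ⟨p, hp⟩ := mem_leavesCBT_iff.1 hx
        obtain ⟨q, hq⟩ := mem_leavesCBT_iff.1 hy
        exact ⟨[], false, p, q, by simp [posIn, hp], by simp [posIn, hl y hy, hq]⟩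
      · obtain ⟨p, hp⟩ := mem_leavesCBT_iff.1 hx
        obtain ⟨q, hq⟩ := mem_leavesCBT_iff.1 hy
        exact ⟨[], true, p, q, by simp [posIn, hl x hx, hp], by simp [posIn, hq]⟩
      · obtain ⟨s, a, p, q, h₁, h₂⟩ := ihr hndr hx hy
        exact ⟨true :: s, a, p, q, by simp [posIn, hl x hx, h₁], by simp [posIn, hl y hy, h₂]⟩

end Trees

section Nadir

variable {n : ℕ}

lemma nadir_comm (T : CBT n) (x y : Fin n) : nadir T x y = nadir T y x := by
  simp only [nadir, lcp_comm]

lemma nadir_eq_of_posIn {T : CBT n} {x y : Fin n} {s p q : List Bool} {a : Bool}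
    (hx : posIn T x = some (s ++ a :: p)) (hy : posIn T y = some (s ++ (!a) :: q)) :
    nadir T x y = s := by
  simp [nadir, hx, hy, lcp_append, lcp_cons_not]

lemma ccw_iff_of_posIn {T : CBT n} {x y : Fin n} {s p q : List Bool} {a : Bool}
    (hx : posIn T x = some (s ++ a :: p)) (hy : posIn T y = some (s ++ (!a) :: q)) :
    Ccw T x y ↔ a = true := by
  refine ⟨fun ⟨s', p', q', hx', hy'⟩ => ?_, fun ha => ⟨s, p, q, ha ▸ hx, by simpa [ha] using hy⟩⟩
  have hs : s = s' := (nadir_eq_of_posIn hx hy).symm.trans (nadir_eq_of_posIn hx' hy')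
  subst hs
  rw [hx, Option.some_inj, List.append_cancel_left_eq, List.cons.injEq] at hx'
  exact hx'.1

lemma ccw_iff_not_ccw {T : CBT n} (hT : Multilinear T) {x y : Fin n} (hxy : x ≠ y) :
    Ccw T x y ↔ ¬Ccw T y x := by
  obtain ⟨s, a, p, q, hx, hy⟩ := exists_posIn_branch hT.1 hxy (hT.2 x) (hT.2 y)
  rw [ccw_iff_of_posIn hx hy, ccw_iff_of_posIn hy (by rwa [Bool.not_not])]
  cases a <;> simp

/-- Of the leaves `i, j, k` of `T`, `i` is the first to branch off. -/
def SplitsFirst (T : CBT n) (i j k : Fin n) : Prop :=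
  nadir T i j = nadir T k i ∧ (Ccw T i j ↔ ¬Ccw T k i)

lemma splitsFirst_of_posIn {T : CBT n} {i j k : Fin n} {s p q r : List Bool} {a : Bool}
    (hi : posIn T i = some (s ++ a :: p)) (hj : posIn T j = some (s ++ (!a) :: q))
    (hk : posIn T k = some (s ++ (!a) :: r)) : SplitsFirst T i j k := by
  have hi' : posIn T i = some (s ++ (!!a) :: p) := by rwa [Bool.not_not]
  refine ⟨(nadir_eq_of_posIn hi hj).trans (nadir_eq_of_posIn hk hi').symm, ?_⟩
  rw [ccw_iff_of_posIn hi hj, ccw_iff_of_posIn hk hi']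
  cases a <;> simp

lemma splitsFirst_trichotomy {T : CBT n} (hT : Multilinear T) {i j k : Fin n}
    (hij : i ≠ j) (hik : i ≠ k) :
    SplitsFirst T i j k ∨ SplitsFirst T j k i ∨ SplitsFirst T k i j := by
  obtain ⟨s, a, p, q, hi, hj⟩ := exists_posIn_branch hT.1 hij (hT.2 i) (hT.2 j)
  obtain ⟨s', a', p', r, hi', hk⟩ := exists_posIn_branch hT.1 hik (hT.2 i) (hT.2 k)
  rw [hi, Option.some_inj, append_cons_eq_append_cons_iff] at hi'
  rcases hi' with ⟨rfl, rfl, rfl⟩ | ⟨u, rfl, rfl⟩ | ⟨u, rfl, rfl⟩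
  · exact Or.inl (splitsFirst_of_posIn hi hj hk)
  · exact Or.inr (Or.inl (splitsFirst_of_posIn hj (by simpa using hk) (by simpa using hi)))
  · exact Or.inr (Or.inr (splitsFirst_of_posIn hk (by simpa using hi) (by simpa using hj)))

end Nadir

section Matching

variable {n : ℕ}

lemma not_isCPB_of_nadir_eq {G : OGraph n} {T : CBT n} {e e' : Fin n × Fin n}
    (he : G.dir e.1 e.2 ≠ none) (he' : G.dir e'.1 e'.2 ≠ none) (hne : e ≠ e')
    (h : nadir T e.1 e.2 = nadir T e'.1 e'.2) : ¬IsCPB G T :=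
  fun hG => hne (hG.1.injOn he he' h)

lemma exists_adj_of_isCPB {G : OGraph n} {T l r : CBT n} {c : Col} {s : List Bool}
    (hT : Multilinear T) (hG : IsCPB G T) (hs : subtreeAt T s = some (.node c l r)) :
    ∃ u ∈ leavesCBT l, ∃ v ∈ leavesCBT r, (toSGO G).Adj u v := by
  obtain ⟨⟨x, y⟩, hxy, hnad⟩ := hG.1.2.2 (mem_internalPos_of_subtreeAt hs)
  have hne : x ≠ y := by rintro rfl; exact hxy (G.loopless x)
  have hadj : (toSGO G).Adj x y := ⟨hne, Or.inl hxy⟩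
  obtain ⟨s', a, p, q, hx, hy⟩ := exists_posIn_branch hT.1 hne (hT.2 x) (hT.2 y)
  obtain rfl : s' = s := (nadir_eq_of_posIn hx hy).symm.trans hnad
  have hx' := mem_leavesCBT_child hs hx
  have hy' := mem_leavesCBT_child hs hy
  cases a
  · exact ⟨x, hx', y, hy', hadj⟩
  · exact ⟨y, hy', x, hx', hadj.symm⟩

lemma reachable_of_isCPB {G : OGraph n} {T : CBT n} (hT : Multilinear T) (hG : IsCPB G T) :
    ∀ (t : CBT n) (s : List Bool), subtreeAt T s = some t →
      ∀ x ∈ leavesCBT t, ∀ y ∈ leavesCBT t, (toSGO G).Reachable x y := by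
  intro t
  induction t with
  | leaf z =>
      intro s _ x hx y hy
      simp only [leavesCBT, List.mem_singleton] at hx hy
      rw [hx, hy]
  | node c l r ihl ihr =>
      intro s hs x hx y hy
      have hl := ihl _ (by rw [subtreeAt_append_singleton false hs]; simp [subtreeAt])
      have hr := ihr _ (by rw [subtreeAt_append_singleton true hs]; simp [subtreeAt])
      obtain ⟨u, hu, v, hv, huv⟩ := exists_adj_of_isCPB hT hG hs
      have across : ∀ w ∈ leavesCBT l, ∀ z ∈ leavesCBT r, (toSGO G).Reachable w z :=
        fun w hw z hz => ((hl w hw u hu).trans huv.reachable).trans (hr v hv z hz)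
      simp only [leavesCBT, List.mem_append] at hx hy
      rcases hx with hx | hx <;> rcases hy with hy | hy
      exacts [hl x hx y hy, across x hx y hy, (across y hy x hx).symm, hr x hx y hy]

lemma nonempty_of_cbt : CBT n → Nonempty (Fin n)
  | .leaf x => ⟨x⟩
  | .node _ l _ => nonempty_of_cbt l

lemma connected_of_isCPB {G : OGraph n} {T : CBT n} (hT : Multilinear T) (hG : IsCPB G T) :
    (toSGO G).Connected := by
  have := nonempty_of_cbt T
  exact ⟨fun x y => reachable_of_isCPB hT hG T [] (by cases T <;> rfl) x (hT.2 x) y (hT.2 y)⟩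

end Matching

lemma prod_add_prod_eq_zero_of_eq_off_pair {ι M : Type*} [Fintype ι] [CommRing M]
    {f g : ι → M} {x y : ι} (hxy : x ≠ y) (hfg : ∀ e, e ≠ x → e ≠ y → f e = g e)
    (h : f x * f y + g x * g y = 0) : ∏ e, f e + ∏ e, g e = 0 := by
  classical
  have hy : y ∈ Finset.univ.erase x := Finset.mem_erase.2 ⟨hxy.symm, Finset.mem_univ y⟩
  have hrest : ∏ e ∈ (Finset.univ.erase x).erase y, f e =
      ∏ e ∈ (Finset.univ.erase x).erase y, g e :=
    Finset.prod_congr rfl fun e he => by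
      simp only [Finset.mem_erase] at he
      exact hfg e he.2.1 he.1
  rw [← Finset.mul_prod_erase _ f (Finset.mem_univ x), ← Finset.mul_prod_erase _ f hy,
    ← Finset.mul_prod_erase _ g (Finset.mem_univ x), ← Finset.mul_prod_erase _ g hy, hrest]
  linear_combination (∏ e ∈ (Finset.univ.erase x).erase y, g e) * h

section EdgeMove

variable {n : ℕ}

open Equiv

lemma tauGT_eq_prod (G : OGraph n) (T : CBT n) :
    tauGT R G T = ∏ e : Fin n × Fin n, if G.dir e.1 e.2 ≠ none ∧ Ccw T e.1 e.2 then -1 else 1 := by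
  rw [tauGT, ← Finset.prod_const, Finset.prod_filter]

-- In the lemmas below, `G'` is `G` with its edge `x` moved to the free slot `y`.
variable {G G' : OGraph n} {T : CBT n} {x y : Fin n × Fin n}

lemma isCPB_of_dir_eq_swap (hdir : ∀ e, G'.dir e.1 e.2 = G.dir (swap x y e).1 (swap x y e).2)
    (hnad : nadir T x.1 x.2 = nadir T y.1 y.2) (hG : IsCPB G T) : IsCPB G' T := by
  have hf : ∀ e, nadir T (swap x y e).1 (swap x y e).2 = nadir T e.1 e.2 := by
    intro e
    rw [swap_apply_def]
    split_ifs with h₁ h₂ <;> subst_vars <;> simp [hnad]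
  refine ⟨?_, fun i j hij => ?_⟩
  · have hswap : Set.BijOn (swap x y) {e | G'.dir e.1 e.2 ≠ none} {e | G.dir e.1 e.2 ≠ none} :=
      (swap x y).bijOn fun e => by simp [hdir]
    exact (hG.1.comp hswap).congr fun e _ => hf e
  · rw [show G'.dir i j = _ from hdir (i, j)] at hij ⊢
    rw [← hf (i, j)]
    exact hG.2 _ _ hij

lemma tauGT_add_tauGT_of_dir_eq_swap (hxy : x ≠ y)
    (hdir : ∀ e, G'.dir e.1 e.2 = G.dir (swap x y e).1 (swap x y e).2)
    (hx : G.dir x.1 x.2 ≠ none) (hy : G.dir y.1 y.2 = none)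
    (hccw : Ccw T x.1 x.2 ↔ ¬Ccw T y.1 y.2) : tauGT R G T + tauGT R G' T = 0 := by
  rw [tauGT_eq_prod, tauGT_eq_prod]
  refine prod_add_prod_eq_zero_of_eq_off_pair hxy (fun e hex hey => ?_) ?_
  · rw [hdir, swap_apply_of_ne_of_ne hex hey]
  · simp only [hdir, swap_apply_left, swap_apply_right, hy]
    by_cases h : Ccw T y.1 y.2 <;> simp [h, hccw, hx]

lemma pairGT_add_pairGT_of_dir_eq_swap (hxy : x ≠ y)
    (hdir : ∀ e, G'.dir e.1 e.2 = G.dir (swap x y e).1 (swap x y e).2)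
    (hx : G.dir x.1 x.2 ≠ none) (hy : G.dir y.1 y.2 = none)
    (hnad : nadir T x.1 x.2 = nadir T y.1 y.2) (hccw : Ccw T x.1 x.2 ↔ ¬Ccw T y.1 y.2) :
    pairGT R G T + pairGT R G' T = 0 := by
  have hdir' : ∀ e, G.dir e.1 e.2 = G'.dir (swap x y e).1 (swap x y e).2 := fun e => by
    rw [hdir, swap_apply_self]
  by_cases hG : IsCPB G T
  · rw [pairGT, pairGT, if_pos hG, if_pos (isCPB_of_dir_eq_swap hdir hnad hG)]
    exact tauGT_add_tauGT_of_dir_eq_swap R hxy hdir hx hy hccw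
  · rw [pairGT, pairGT, if_neg hG, if_neg fun hG' => hG (isCPB_of_dir_eq_swap hdir' hnad hG'),
      add_zero]

end EdgeMove

section Generators

variable {n : ℕ} {G G' G₁ G₂ G₃ G₄ G₅ G₆ : OGraph n} {T : CBT n} {i j k : Fin n}

lemma offTri_rotate {p q : Fin n} : OffTri j k i p q ↔ OffTri i j k p q := by
  unfold OffTri
  tauto

lemma dir_eq_swap_of_tri {c d : Col} (hG : Tri G i j k c d) (hG' : Tri G' j k i d c)
    (hoff : ∀ p q, OffTri i j k p q → G'.dir p q = G.dir p q) (e : Fin n × Fin n) :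
    G'.dir e.1 e.2 = G.dir (Equiv.swap (i, j) (k, i) e).1 (Equiv.swap (i, j) (k, i) e).2 := by
  obtain ⟨g₁, g₂, g₃, g₄, g₅, g₆⟩ := hG
  obtain ⟨g₁', g₂', g₃', g₄', g₅', g₆'⟩ := hG'
  obtain ⟨p, q⟩ := e
  rw [Equiv.swap_apply_def]
  split_ifs with h₁ h₂
  · simp_all
  · simp_all
  · by_cases h : OffTri i j k p q
    · exact hoff p q h
    · simp only [OffTri, not_not] at h
      rcases h with ⟨rfl, rfl⟩ | ⟨rfl, rfl⟩ | ⟨rfl, rfl⟩ | ⟨rfl, rfl⟩ | ⟨rfl, rfl⟩ |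
        ⟨rfl, rfl⟩ <;> simp_all

lemma pairGT_add_pairGT_of_tri {c d : Col} (hik : i ≠ k) (hG : Tri G i j k c d)
    (hG' : Tri G' j k i d c) (hoff : ∀ p q, OffTri i j k p q → G'.dir p q = G.dir p q)
    (hT : SplitsFirst T i j k) : pairGT R G T + pairGT R G' T = 0 :=
  pairGT_add_pairGT_of_dir_eq_swap R (by simp [hik]) (dir_eq_swap_of_tri hG hG' hoff)
    (by simp [hG.1]) hG.2.2.2.2.2 hT.1 hT.2

lemma pairGT_eq_zero_of_tri {c d : Col} (hik : i ≠ k) (hG : Tri G k i j c d)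
    (hT : SplitsFirst T i j k) : pairGT R G T = 0 := by
  rw [pairGT, if_neg (not_isCPB_of_nadir_eq (e := (k, i)) (e' := (i, j)) (by simp [hG.1])
    (by simp [hG.2.1]) (by simp [hik.symm]) hT.1.symm)]

lemma pairGT_jacobi_of_splitsFirst {c : Col} (hik : i ≠ k) (h₁ : Tri G₁ i j k c c)
    (h₂ : Tri G₂ j k i c c) (h₃ : Tri G₃ k i j c c)
    (h₁₂ : ∀ p q, OffTri i j k p q → G₂.dir p q = G₁.dir p q) (hT : SplitsFirst T i j k) :
    pairGT R G₁ T + pairGT R G₂ T + pairGT R G₃ T = 0 := by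
  rw [pairGT_add_pairGT_of_tri R hik h₁ h₂ h₁₂ hT, pairGT_eq_zero_of_tri R hik h₃ hT, add_zero]

lemma pairGT_mixed_of_splitsFirst (hik : i ≠ k)
    (h₁ : Tri G₁ i j k .red .blue) (h₂ : Tri G₂ j k i .red .blue) (h₃ : Tri G₃ k i j .red .blue)
    (h₄ : Tri G₄ i j k .blue .red) (h₅ : Tri G₅ j k i .blue .red) (h₆ : Tri G₆ k i j .blue .red)
    (h₁₅ : ∀ p q, OffTri i j k p q → G₅.dir p q = G₁.dir p q)
    (h₄₂ : ∀ p q, OffTri i j k p q → G₂.dir p q = G₄.dir p q) (hT : SplitsFirst T i j k) :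
    pairGT R G₁ T + pairGT R G₂ T + pairGT R G₃ T +
      pairGT R G₄ T + pairGT R G₅ T + pairGT R G₆ T = 0 := by
  linear_combination pairGT_add_pairGT_of_tri R hik h₁ h₅ h₁₅ hT +
    pairGT_add_pairGT_of_tri R hik h₄ h₂ h₄₂ hT + pairGT_eq_zero_of_tri R hik h₃ hT +
    pairGT_eq_zero_of_tri R hik h₆ hT

end Generators

section Vanishing

variable {n : ℕ} {G₁ G₂ G₃ G₄ G₅ G₆ : OGraph n} {i j k : Fin n}

lemma pairGT_jacobi {c : Col} (hij : i ≠ j) (hjk : j ≠ k) (hik : i ≠ k)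
    (h₁ : Tri G₁ i j k c c) (h₂ : Tri G₂ j k i c c) (h₃ : Tri G₃ k i j c c)
    (hoff : ∀ p q, OffTri i j k p q → G₂.dir p q = G₁.dir p q ∧ G₃.dir p q = G₁.dir p q)
    (T : BT n) : pairGT R G₁ T.1 + pairGT R G₂ T.1 + pairGT R G₃ T.1 = 0 := by
  rcases splitsFirst_trichotomy T.2 hij hik with hT | hT | hT
  · exact pairGT_jacobi_of_splitsFirst R hik h₁ h₂ h₃ (fun p q h => (hoff p q h).1) hT
  · have := pairGT_jacobi_of_splitsFirst R hij.symm h₂ h₃ h₁ (fun p q (h : OffTri j k i p q) => by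
      obtain ⟨e₂, e₃⟩ := hoff p q (offTri_rotate.1 h); rw [e₂, e₃]) hT
    linear_combination this
  · have := pairGT_jacobi_of_splitsFirst R hjk.symm h₃ h₁ h₂ (fun p q (h : OffTri k i j p q) =>
      (hoff p q (offTri_rotate.1 (offTri_rotate.1 h))).2.symm) hT
    linear_combination this


lemma pairGT_mixed (hij : i ≠ j) (hjk : j ≠ k) (hik : i ≠ k)
    (h₁ : Tri G₁ i j k .red .blue) (h₂ : Tri G₂ j k i .red .blue) (h₃ : Tri G₃ k i j .red .blue)
    (h₄ : Tri G₄ i j k .blue .red) (h₅ : Tri G₅ j k i .blue .red) (h₆ : Tri G₆ k i j .blue .red)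
    (hoff : ∀ p q, OffTri i j k p q →
      G₂.dir p q = G₁.dir p q ∧ G₃.dir p q = G₁.dir p q ∧ G₄.dir p q = G₁.dir p q ∧
      G₅.dir p q = G₁.dir p q ∧ G₆.dir p q = G₁.dir p q)
    (T : BT n) :
    pairGT R G₁ T.1 + pairGT R G₂ T.1 + pairGT R G₃ T.1 +
      pairGT R G₄ T.1 + pairGT R G₅ T.1 + pairGT R G₆ T.1 = 0 := by
  have agree : ∀ p q, OffTri i j k p q → ∀ G G' : OGraph n,
      G ∈ [G₁, G₂, G₃, G₄, G₅, G₆] → G' ∈ [G₁, G₂, G₃, G₄, G₅, G₆] → G.dir p q = G'.dir p q := by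
    intro p q h G G' hG hG'
    obtain ⟨e₂, e₃, e₄, e₅, e₆⟩ := hoff p q h
    simp only [List.mem_cons, List.not_mem_nil, or_false] at hG hG'
    rcases hG with rfl | rfl | rfl | rfl | rfl | rfl <;>
      rcases hG' with rfl | rfl | rfl | rfl | rfl | rfl <;> simp only [e₂, e₃, e₄, e₅, e₆]
  rcases splitsFirst_trichotomy T.2 hij hik with hT | hT | hT
  · exact pairGT_mixed_of_splitsFirst R hik h₁ h₂ h₃ h₄ h₅ h₆
      (fun p q h => agree p q h _ _ (by simp) (by simp))
      (fun p q h => agree p q h _ _ (by simp) (by simp)) hT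
  · have := pairGT_mixed_of_splitsFirst R hij.symm h₂ h₃ h₁ h₅ h₆ h₄
      (fun p q h => agree p q (offTri_rotate.1 h) _ _ (by simp) (by simp))
      (fun p q h => agree p q (offTri_rotate.1 h) _ _ (by simp) (by simp)) hT
    linear_combination this
  · have := pairGT_mixed_of_splitsFirst R hjk.symm h₃ h₁ h₂ h₆ h₄ h₅
      (fun p q h => agree p q (offTri_rotate.1 (offTri_rotate.1 h)) _ _ (by simp) (by simp))
      (fun p q h => agree p q (offTri_rotate.1 (offTri_rotate.1 h)) _ _ (by simp) (by simp)) hT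
    linear_combination this

end Vanishing

section Relations

variable {n : ℕ}

lemma pairGT_eq_zero_of_not_connected {G : OGraph n} (hG : ¬(toSGO G).Connected) (T : BT n) :
    pairGT R G T.1 = 0 :=
  if_neg fun h => hG (connected_of_isCPB T.2 h)

lemma pairGT_eq_zero_of_double_edge {G : OGraph n} {i j : Fin n} (hij : G.dir i j ≠ none)
    (hji : G.dir j i ≠ none) (T : BT n) : pairGT R G T.1 = 0 := by
  have hne : i ≠ j := by rintro rfl; exact hij (G.loopless i)
  exact if_neg (not_isCPB_of_nadir_eq (e := (i, j)) (e' := (j, i)) hij hji (by simp [hne])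
    (nadir_comm _ i j))

lemma pairGT_add_pairGT_of_reverse {G₁ G₂ : OGraph n} {i j : Fin n} {c : Col}
    (h₁ : G₁.dir i j = some c) (h₁' : G₁.dir j i = none)
    (h₂ : G₂.dir i j = none) (h₂' : G₂.dir j i = some c)
    (hoff : ∀ p q, ¬((p = i ∧ q = j) ∨ (p = j ∧ q = i)) → G₂.dir p q = G₁.dir p q) (T : BT n) :
    pairGT R G₁ T.1 + pairGT R G₂ T.1 = 0 := by
  have hne : i ≠ j := by rintro rfl; simp [G₁.loopless] at h₁
  refine pairGT_add_pairGT_of_dir_eq_swap R (x := (i, j)) (y := (j, i)) (by simp [hne])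
    (fun ⟨p, q⟩ => ?_) (by simp [h₁]) h₁' (nadir_comm _ i j) (ccw_iff_not_ccw T.2 hne)
  rw [Equiv.swap_apply_def]
  split_ifs with h h'
  · simp_all
  · simp_all
  · exact hoff p q (by simp_all)

lemma pairing_eq_sum_linearCombination (β : Gamma R n) (α : Theta R n) :
    pairing R β α =
      α.sum fun T a => a * Finsupp.linearCombination R (fun G => pairGT R G T.1) β := by
  rw [pairing, Finsupp.sum_comm]
  refine Finsupp.sum_congr fun T _ => ?_
  rw [Finsupp.linearCombination_apply, Finsupp.mul_sum]
  refine Finsupp.sum_congr fun G _ => ?_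
  rw [smul_eq_mul]
  ring

lemma linearCombination_pairGT_eq_zero {β : Gamma R n} (hβ : β ∈ In R n) (T : BT n) :
    Finsupp.linearCombination R (fun G : OGraph n => pairGT R G T.1) β = 0 := by
  refine (Submodule.span_le.2 ?_ : In R n ≤ LinearMap.ker _) hβ
  rintro x ((((⟨G, hG, rfl⟩ | ⟨G, ⟨i, j, hij, hji⟩, rfl⟩) |
      ⟨G₁, G₂, i, j, c, h₁, h₁', h₂, h₂', hoff, rfl⟩) |
      ⟨G₁, G₂, G₃, i, j, k, c, hij, hjk, hik, h₁, h₂, h₃, hoff, rfl⟩) |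
      ⟨G₁, G₂, G₃, G₄, G₅, G₆, i, j, k, hij, hjk, hik, h₁, h₂, h₃, h₄, h₅, h₆, hoff, rfl⟩) <;>
    simp only [SetLike.mem_coe, LinearMap.mem_ker, map_add, Finsupp.linearCombination_single,
      one_smul]
  · exact pairGT_eq_zero_of_not_connected R hG T
  · exact pairGT_eq_zero_of_double_edge R hij hji T
  · exact pairGT_add_pairGT_of_reverse R h₁ h₁' h₂ h₂' hoff T
  · exact pairGT_jacobi R hij hjk hik h₁ h₂ h₃ hoff T
  · exact pairGT_mixed R hij hjk hik h₁ h₂ h₃ h₄ h₅ h₆ hoff T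

end Relations

theorem stmt10 (n : ℕ) (β : Gamma R n) (α : Theta R n) (hβ : β ∈ In R n) :
    pairing R β α = 0 := by
  rw [pairing_eq_sum_linearCombination]
  simp [linearCombination_pairGT_eq_zero R hβ]

end LiuPaper
end
end

section
/- If G, H ∈ 𝒢̄_n and G →_op H, then: (i) G and H have the same number of red edges and the same number of blue edges; (ii) ι(G) ≤_rlex ι(H), and moreover if ι(G) <_rlex ι(H) then the vectors ι(G) and ι(H) differ in exactly two coordinates. -/
/-
Formalization of definitions and a statement from:
"Combinatorial bases for multilinear parts of free algebras with double compatible brackets"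
(Fu Liu).  The alphabet X = {x_1 < ... < x_n} is identified with Fin n.
-/

noncomputable section
namespace LiuPaper

attribute [local instance] Classical.propDecidable

variable (R : Type*) [CommRing R]

/-! ### Graphical roots and the map `𝒢 : ℬ𝒯_n → 𝒢̄_n` -/

/-- The graphical root of a monomial: a red bracket takes the min, a blue bracket the max. -/
def grRoot {n : ℕ} : CBT n → Fin n
  | .leaf x => x
  | .node .red l r => min (grRoot l) (grRoot r)
  | .node .blue l r => max (grRoot l) (grRoot r)

/-- The two-colored graph `𝒢(T)` corresponding to a monomial `T`: recursively join the
graphical roots of the two subtrees by an edge colored by the color of the root of `T`. -/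
def Gmap {n : ℕ} : CBT n → TCGraph n
  | .leaf _ => fun _ => none
  | .node c l r =>
      let Gl := Gmap l
      let Gr := Gmap r
      fun e => if e = s(grRoot l, grRoot r) then some c else (Gl e).orElse (fun _ => Gr e)

/-! ### The construction `G ↦ b_G` -/

/-- The graph with root vertex `r` deleted. -/
def delV {n : ℕ} (G : TCGraph n) (r : Fin n) : SimpleGraph (Fin n) where
  Adj u v := (toSG G).Adj u v ∧ u ≠ r ∧ v ≠ r
  symm := ⟨by rintro u v ⟨h, h1, h2⟩; exact ⟨h.symm, h2, h1⟩⟩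
  loopless := ⟨fun v hv => (toSG G).loopless.irrefl v hv.1⟩

/-- The vertex set of the subtree of `G` hanging at `c` (away from the root `r`):
the connected component of `c` in `G` with `r` deleted. -/
def compSet {n : ℕ} (G : TCGraph n) (r c : Fin n) : Set (Fin n) :=
  {v | (delV G r).Reachable c v}

/-- Restriction of a two-colored graph to the edges with both endpoints in `S`. -/
def restrict {n : ℕ} (G : TCGraph n) (S : Set (Fin n)) : TCGraph n :=
  fun e => if ∀ x ∈ e, x ∈ S then G e else none

/-- The recursive construction of the monomial `b_G` from a two-colored rooted tree `G` with
root `r` (Definition 3.1): `BuildB G r T` holds iff `T = b_G`.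
* If `G` is a single vertex `r` (no edges), then `b_G = r`.
* If some edge at `r` is red, take the smallest `c` with `{r,c}` red; then
  `b_G = [b_{G∖G_c}, b_{G_c}]` (a red node).
* If all edges at `r` are blue, take the largest neighbor `c`; then
  `b_G = ⟨b_{G_c}, b_{G∖G_c}⟩` (a blue node). -/
inductive BuildB {n : ℕ} : TCGraph n → Fin n → CBT n → Prop
  | leaf (r : Fin n) : BuildB (fun _ => none) r (.leaf r)
  | red (G : TCGraph n) (r c : Fin n) (T₁ T₂ : CBT n)
      (hc : G s(r, c) = some Col.red)
      (hmin : ∀ c' : Fin n, G s(r, c') = some Col.red → c ≤ c')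
      (h₁ : BuildB (restrict G (compSet G r c)ᶜ) r T₁)
      (h₂ : BuildB (restrict G (compSet G r c)) c T₂) :
      BuildB G r (.node .red T₁ T₂)
  | blue (G : TCGraph n) (r c : Fin n) (T₁ T₂ : CBT n)
      (hnored : ∀ c' : Fin n, G s(r, c') ≠ some Col.red)
      (hc : G s(r, c) = some Col.blue)
      (hmax : ∀ c' : Fin n, G s(r, c') ≠ none → c' ≤ c)
      (h₁ : BuildB (restrict G (compSet G r c)) c T₁)
      (h₂ : BuildB (restrict G (compSet G r c)ᶜ) r T₂) :
      BuildB G r (.node .blue T₁ T₂)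

/-- `r` is the root of the two-colored rooted tree `G`: it is the child endpoint of no edge
(for a red edge `{i,j}` with `i < j` the child is `j`; for a blue one it is `i`). -/
def IsRoot {n : ℕ} (G : TCGraph n) (r : Fin n) : Prop :=
  ∀ i j : Fin n, i < j →
    (G s(i, j) = some Col.red → j ≠ r) ∧ (G s(i, j) = some Col.blue → i ≠ r)

/-! ### The operation order `≤_op` on `𝒢̄_n` -/

/-- Update the color of one unordered pair. -/
def updEdge {n : ℕ} (G : TCGraph n) (e : Sym2 (Fin n)) (v : Option Col) : TCGraph n :=
  fun e' => if e' = e then v else G e'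

/-- `p` is the parent of `y` in `G` rooted at `r`. -/
def ParentIn {n : ℕ} (G : TCGraph n) (r p y : Fin n) : Prop :=
  (toSG G).Adj p y ∧ (toSG G).dist r p + 1 = (toSG G).dist r y

/-- `H` is the graph operated from `G` (rooted at `r`) with respect to the non-root vertex `y`:
delete the edge `e(y)` from `y` to its parent and add an edge of the same color from the
root `r` to `y`. -/
def OperatedFrom {n : ℕ} (G H : TCGraph n) (r y : Fin n) : Prop :=
  ∃ (p : Fin n) (κ : Col), IsRoot G r ∧ y ≠ r ∧ ParentIn G r p y ∧ G s(p, y) = some κ ∧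
    H = updEdge (updEdge G s(p, y) none) s(r, y) (some κ)

/-- Two-colored trees supported on a vertex subset `V` avoiding the three patterns
(`𝒢̄` relativized to a sub-alphabet). -/
def GbarOn {n : ℕ} (V : Set (Fin n)) : Set (TCGraph n) :=
  {G | Loopless G ∧ (∀ e : Sym2 (Fin n), G e ≠ none → ∀ x ∈ e, x ∈ V) ∧
    ((toSG G).induce V).IsTree ∧ ¬Pat1r3r2 G ∧ ¬Pat2b1b3 G ∧ ¬Pat1r2b3 G}

/-- Overlay of two (edge-disjointly supported) two-colored graphs. -/
def unionG {n : ℕ} (A B : TCGraph n) : TCGraph n :=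
  fun e => (A e).orElse (fun _ => B e)

/-- The relation `→_op` on two-colored rooted trees supported on a vertex set `V`
(the recursion passes to the sub-alphabets of 1-level subtrees).  For distinct `G, H`:
either `H` is operated from `G` with respect to some non-root vertex `y`, or `H` is obtained
from `G` by replacing the subtree `G(x)` at a 1-level vertex `x` by a tree `H'` with
`G(x) →_op H'`, joined to the root by an edge of the same color as `e(x)`. -/
inductive OpStep {n : ℕ} : Set (Fin n) → TCGraph n → TCGraph n → Prop
  | base (V : Set (Fin n)) (G H : TCGraph n) (r y : Fin n) :
      G ∈ GbarOn V → H ∈ GbarOn V → G ≠ H →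
      OperatedFrom G H r y → OpStep V G H
  | congr (V : Set (Fin n)) (G H H' : TCGraph n) (r x y : Fin n) (κ : Col) :
      G ∈ GbarOn V → H ∈ GbarOn V → G ≠ H →
      IsRoot G r → G s(r, x) = some κ →
      OpStep (compSet G r x) (restrict G (compSet G r x)) H' →
      IsRoot H' y → y ∈ compSet G r x →
      H = updEdge (unionG (restrict G (compSet G r x)ᶜ) H') s(r, y) (some κ) →
      OpStep V G H

/-- `≤_op`: the reflexive-transitive closure of `→_op` (at the top level, on the full
alphabet). -/
def LeOp (n : ℕ) : TCGraph n → TCGraph n → Prop :=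
  Relation.ReflTransGen (OpStep (Set.univ : Set (Fin n)))

/-- The index `ι(G)` of a two-colored rooted tree `G` with root `r`:
`+1` at the child endpoint of a red edge, `-1` at the child endpoint of a blue edge,
`0` at the root. -/
def iota {n : ℕ} (G : TCGraph n) (r : Fin n) (i : Fin n) : ℤ :=
  if ∃ p : Fin n, ParentIn G r p i ∧ G s(p, i) = some Col.red then 1
  else if ∃ p : Fin n, ParentIn G r p i ∧ G s(p, i) = some Col.blue then -1
  else 0

/-- Reverse lexicographic comparison: `f <_rlex g` iff the rightmost nonzero entry of
`f - g` is negative. -/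
def RLexLt {n : ℕ} (f g : Fin n → ℤ) : Prop :=
  ∃ i : Fin n, f i < g i ∧ ∀ j : Fin n, i < j → f j = g j

/-- The number of edges of a given color. -/
def colCount {n : ℕ} (G : TCGraph n) (c : Col) : ℕ :=
  (Finset.univ.filter (fun e : Sym2 (Fin n) => G e = some c)).card


/-!
Read every edge as pointing from parent to child: red edges upwards, blue edges downwards
(`Col.head`). The three forbidden patterns say that no vertex has two incoming edges, so in a
tree of `𝒢̄_n` the distance-parents are the color-parents and `ι` records at each vertex the sign
of the color of its incoming edge; this index is additive when trees with disjoint vertex sets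
are glued. Both kinds of steps `G →_op H` hang a tree back on the root by an edge of the same
color `κ` as the edge they remove (for a congruence step, after a step `G(x) →_op H'` inside the
branch, which by induction exchanges two entries of `ι(G(x))`). Hence the colors are preserved,
and following where the new edge points shows that `ι(H)` is `ι(G)` with at most two entries
exchanged, the larger one moving right.
-/

def Col.sign : Col → ℤ
  | .red => 1
  | .blue => -1

/-- The child endpoint of an edge `{p, q}` of color `κ`: red edges increase, blue edges
decrease away from the root. -/
def Col.head {α : Type*} [LinearOrder α] : Col → α → α → α
  | .red, p, q => max p q
  | .blue, p, q => min p q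

theorem Col.head_comm {α : Type*} [LinearOrder α] (κ : Col) (p q : α) :
    κ.head p q = κ.head q p := by
  cases κ
  exacts [max_comm p q, min_comm p q]

theorem Col.head_eq_or {α : Type*} [LinearOrder α] (κ : Col) (p q : α) :
    κ.head p q = p ∨ κ.head p q = q := by
  cases κ
  exacts [max_choice p q, min_choice p q]

theorem Col.lt_iff_sign_pos {α : Type*} [LinearOrder α] {κ : Col} {p q : α} (hpq : p ≠ q)
    (hq : κ.head p q = q) : p < q ↔ 0 < κ.sign := by
  cases κ <;> simp only [Col.head, Col.sign] at hq ⊢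
  · simpa using lt_of_le_of_ne (max_eq_right_iff.mp hq) hpq
  · simpa using min_eq_right_iff.mp hq

section ColorParent

variable {n : ℕ}

/-- `p` is the parent of `q` as dictated by the color of `{p, q}` (`ParentIn` uses distances). -/
def ColorParent (G : TCGraph n) (p q : Fin n) : Prop :=
  (p < q ∧ G s(p, q) = some Col.red) ∨ (q < p ∧ G s(p, q) = some Col.blue)

def PatternFree (G : TCGraph n) : Prop := ¬Pat1r3r2 G ∧ ¬Pat2b1b3 G ∧ ¬Pat1r2b3 G

/-- The index `ι`, computed from the coloring alone (without reference to a root). -/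
def colorIndex (G : TCGraph n) (q : Fin n) : ℤ :=
  if ∃ p, ColorParent G p q ∧ G s(p, q) = some Col.red then 1
  else if ∃ p, ColorParent G p q ∧ G s(p, q) = some Col.blue then -1
  else 0

variable {G K : TCGraph n} {p q t : Fin n} {κ : Col}

theorem ColorParent.ne (h : ColorParent G p q) : p ≠ q := by
  rcases h with ⟨h, -⟩ | ⟨h, -⟩
  exacts [h.ne, h.ne']

theorem ColorParent.edge_ne_none (h : ColorParent G p q) : G s(p, q) ≠ none := by
  rcases h with ⟨-, h⟩ | ⟨-, h⟩ <;> simp [h]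

theorem ColorParent.head_eq (h : ColorParent G p q) (hκ : G s(p, q) = some κ) :
    κ.head p q = q := by
  rcases h with ⟨h, h'⟩ | ⟨h, h'⟩ <;> rw [h'] at hκ <;> cases hκ
  exacts [max_eq_right h.le, min_eq_right h.le]

theorem colorParent_of_head_eq (hpq : p ≠ q) (hκ : G s(p, q) = some κ) (hq : κ.head p q = q) :
    ColorParent G p q := by
  cases κ
  · exact Or.inl ⟨lt_of_le_of_ne (max_eq_right_iff.mp hq) hpq, hκ⟩
  · exact Or.inr ⟨lt_of_le_of_ne (min_eq_right_iff.mp hq) hpq.symm, hκ⟩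

theorem ColorParent.not_symm (h : ColorParent G p q) : ¬ColorParent G q p := by
  intro h'
  obtain ⟨κ, hκ⟩ := Option.ne_none_iff_exists'.mp h.edge_ne_none
  have := h'.head_eq (by rwa [Sym2.eq_swap])
  rw [Col.head_comm, h.head_eq hκ] at this
  exact h.ne this.symm

theorem colorParent_or_colorParent (hpq : p ≠ q) (hκ : G s(p, q) = some κ) :
    ColorParent G p q ∨ ColorParent G q p := by
  rcases κ.head_eq_or p q with h | h
  · exact Or.inr (colorParent_of_head_eq hpq.symm (by rwa [Sym2.eq_swap])
      (by rwa [Col.head_comm]))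
  · exact Or.inl (colorParent_of_head_eq hpq hκ h)

/-- The three forbidden patterns say exactly that no vertex has two color-parents. -/
theorem PatternFree.colorParent_unique (hG : PatternFree G) (hp : ColorParent G p q)
    (ht : ColorParent G t q) : p = t := by
  by_contra hne
  obtain ⟨h1, h2, h3⟩ := hG
  rcases hp with ⟨hp1, hp2⟩ | ⟨hp1, hp2⟩ <;> rcases ht with ⟨ht1, ht2⟩ | ⟨ht1, ht2⟩
  · rcases lt_or_gt_of_ne hne with h | h
    exacts [h1 ⟨p, t, q, h, ht1, hp2, ht2⟩, h1 ⟨t, p, q, h, hp1, ht2, hp2⟩]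
  · exact h3 ⟨p, q, t, hp1, ht1, hp2, by rwa [Sym2.eq_swap]⟩
  · exact h3 ⟨t, q, p, ht1, hp1, ht2, by rwa [Sym2.eq_swap]⟩
  · rw [Sym2.eq_swap] at hp2 ht2
    rcases lt_or_gt_of_ne hne with h | h
    exacts [h2 ⟨q, p, t, hp1, h, hp2, ht2⟩, h2 ⟨q, t, p, ht1, h, ht2, hp2⟩]

theorem colorIndex_eq_zero_iff : colorIndex G q = 0 ↔ ∀ p, ¬ColorParent G p q := by
  constructor
  · intro h p hp
    obtain ⟨κ, hκ⟩ := Option.ne_none_iff_exists'.mp hp.edge_ne_none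
    unfold colorIndex at h
    split_ifs at h with hr hb <;> try omega
    cases κ
    exacts [hr ⟨p, hp, hκ⟩, hb ⟨p, hp, hκ⟩]
  · intro h
    simp [colorIndex, h]

theorem colorIndex_eq_sign (hp : ColorParent G p q) (hκ : G s(p, q) = some κ)
    (huniq : ∀ t, ColorParent G t q → t = p) : colorIndex G q = κ.sign := by
  have hcol : ∀ c, (∃ t, ColorParent G t q ∧ G s(t, q) = some c) ↔ c = κ := by
    intro c
    constructor
    · rintro ⟨t, ht, hc⟩
      rw [huniq t ht, hκ] at hc
      exact (Option.some.inj hc).symm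
    · rintro rfl
      exact ⟨p, hp, hκ⟩
  cases κ <;> simp [colorIndex, hcol, Col.sign]

theorem abs_colorIndex_le_one (G : TCGraph n) (q : Fin n) : |colorIndex G q| ≤ 1 := by
  unfold colorIndex
  split_ifs <;> simp

theorem colorIndex_congr (hpar : ∀ t, ColorParent K t q ↔ ColorParent G t q)
    (hedge : ∀ t, ColorParent G t q → K s(t, q) = G s(t, q)) :
    colorIndex K q = colorIndex G q := by
  have key : ∀ c, (∃ t, ColorParent K t q ∧ K s(t, q) = c) ↔
      (∃ t, ColorParent G t q ∧ G s(t, q) = c) := by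
    intro c
    refine exists_congr fun t => ⟨fun ⟨ht, hc⟩ => ?_, fun ⟨ht, hc⟩ => ?_⟩
    · have ht' := (hpar t).mp ht
      exact ⟨ht', (hedge t ht') ▸ hc⟩
    · exact ⟨(hpar t).mpr ht, (hedge t ht).symm ▸ hc⟩
  simp only [colorIndex, key]

theorem colorParent_congr (h : K s(t, q) = G s(t, q)) :
    ColorParent K t q ↔ ColorParent G t q := by
  simp only [ColorParent, h]

theorem colorIndex_congr_of_edges (h : ∀ t, K s(t, q) = G s(t, q)) :
    colorIndex K q = colorIndex G q :=
  colorIndex_congr (fun t => colorParent_congr (h t)) fun t _ => h t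

theorem isRoot_iff_colorIndex_eq_zero {r : Fin n} : IsRoot G r ↔ colorIndex G r = 0 := by
  rw [colorIndex_eq_zero_iff]
  constructor
  · rintro h p (⟨h1, h2⟩ | ⟨h1, h2⟩)
    · exact (h p r h1).1 h2 rfl
    · exact (h r p h1).2 (by rwa [Sym2.eq_swap] at h2) rfl
  · intro h i j hij
    refine ⟨fun hred hjr => ?_, fun hblue hir => ?_⟩
    · subst hjr
      exact h i (Or.inl ⟨hij, hred⟩)
    · subst hir
      exact h j (Or.inr ⟨hij, by rwa [Sym2.eq_swap]⟩)

end ColorParent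

theorem _root_.SimpleGraph.Reachable.exists_adj_dist_add_one {V : Type*} {Γ : SimpleGraph V}
    {r y : V} (hre : Γ.Reachable r y) (hne : r ≠ y) :
    ∃ p, Γ.Adj p y ∧ Γ.dist r p + 1 = Γ.dist r y := by
  obtain ⟨w, hw⟩ := hre.exists_walk_length_eq_dist
  cases hwr : w.reverse with
  | nil => exact absurd rfl hne
  | @cons _ p _ hadj w' =>
    have hlen : w'.length + 1 = Γ.dist r y := by
      rw [← hw, ← SimpleGraph.Walk.length_reverse w, hwr, SimpleGraph.Walk.length_cons]
    have h1 : Γ.dist r p ≤ w'.length := by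
      simpa using SimpleGraph.dist_le w'.reverse
    have h2 : Γ.dist r y ≤ Γ.dist r p + 1 := by
      simpa [SimpleGraph.dist_eq_one_iff_adj.mpr hadj.symm] using
        hadj.symm.reachable.dist_triangle_right r
    exact ⟨p, hadj.symm, by omega⟩

section Rooted

variable {n : ℕ} {G : TCGraph n} {r p y : Fin n}

/-- By induction on the distance: a wrongly oriented edge `{p, y}` would give `p` a second
color-parent besides its own distance-parent. -/
theorem PatternFree.colorParent_of_parentIn (hG : PatternFree G) (hr : IsRoot G r)
    (h : ParentIn G r p y) : ColorParent G p y := by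
  rw [isRoot_iff_colorIndex_eq_zero, colorIndex_eq_zero_iff] at hr
  induction hd : (toSG G).dist r y using Nat.strong_induction_on generalizing p y with
  | _ d ih =>
    obtain ⟨hadj, hdist⟩ := h
    obtain ⟨κ, hκ⟩ := Option.ne_none_iff_exists'.mp hadj.2
    refine (colorParent_or_colorParent hadj.1 hκ).resolve_right fun hyp => ?_
    have hpr : r ≠ p := fun hrp => hr y (hrp ▸ hyp)
    have hreach : (toSG G).Reachable r p :=
      (SimpleGraph.Reachable.of_dist_ne_zero (by omega)).trans hadj.symm.reachable
    obtain ⟨q, hq⟩ := hreach.exists_adj_dist_add_one hpr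
    have hqp : ColorParent G q p := ih _ (by omega) hq rfl
    have hyq : y = q := hG.colorParent_unique hyp hqp
    subst hyq
    omega

theorem PatternFree.parentIn_iff (hG : PatternFree G) (hr : IsRoot G r)
    (hre : (toSG G).Reachable r y) : ParentIn G r p y ↔ ColorParent G p y := by
  refine ⟨hG.colorParent_of_parentIn hr, fun hp => ?_⟩
  have hry : r ≠ y := by
    rintro rfl
    exact colorIndex_eq_zero_iff.mp (isRoot_iff_colorIndex_eq_zero.mp hr) p hp
  obtain ⟨q, hq⟩ := hre.exists_adj_dist_add_one hry
  rwa [hG.colorParent_unique hp (hG.colorParent_of_parentIn hr hq)]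

theorem iota_eq_colorIndex (hG : PatternFree G) (hr : IsRoot G r)
    (hconn : (toSG G).Connected) : iota G r = colorIndex G :=
  funext fun y => by simp only [iota, colorIndex, hG.parentIn_iff hr (hconn.preconnected r y)]

end Rooted

section Gluing

variable {n : ℕ}

def SupportedOn (G : TCGraph n) (S : Set (Fin n)) : Prop :=
  ∀ e, G e ≠ none → ∀ v ∈ e, v ∈ S

variable {G K A B : TCGraph n} {S : Set (Fin n)} {e : Sym2 (Fin n)} {p q t v : Fin n} {κ : Col}

theorem SupportedOn.eq_none (h : SupportedOn G S) (hv : v ∈ e) (hvS : v ∉ S) : G e = none := by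
  by_contra hne
  exact hvS (h e hne v hv)

theorem SupportedOn.colorIndex_eq_zero (h : SupportedOn G S) (hq : q ∉ S) :
    colorIndex G q = 0 :=
  colorIndex_eq_zero_iff.mpr fun t ht => ht.edge_ne_none (h.eq_none (Sym2.mem_mk_right t q) hq)

theorem SupportedOn.mem_of_colorParent (h : SupportedOn G S) (ht : ColorParent G t q) :
    t ∈ S := by
  by_contra htS
  exact ht.edge_ne_none (h.eq_none (Sym2.mem_mk_left t q) htS)

theorem supportedOn_restrict (G : TCGraph n) (S : Set (Fin n)) :
    SupportedOn (restrict G S) S := by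
  intro e he v hv
  unfold restrict at he
  split_ifs at he with h
  · exact h v hv
  · exact absurd rfl he

theorem unionG_eq_left (h : B e = none) : unionG A B e = A e := by
  cases hA : A e <;> simp [unionG, hA, h]

theorem unionG_eq_right (h : A e = none) : unionG A B e = B e := by
  simp [unionG, h]

theorem eq_none_or_eq_none (hA : SupportedOn A Sᶜ) (hB : SupportedOn B S) (e : Sym2 (Fin n)) :
    A e = none ∨ B e = none := by
  induction e using Sym2.ind with
  | _ a b =>
    by_cases ha : a ∈ S
    · exact Or.inl (hA.eq_none (Sym2.mem_mk_left a b) (not_not_intro ha))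
    · exact Or.inr (hB.eq_none (Sym2.mem_mk_left a b) ha)

theorem colCount_unionG (hA : SupportedOn A Sᶜ) (hB : SupportedOn B S) (c : Col) :
    colCount (unionG A B) c = colCount A c + colCount B c := by
  unfold colCount
  rw [← Finset.card_union_of_disjoint]
  · congr 1
    ext e
    simp only [Finset.mem_filter, Finset.mem_univ, true_and, Finset.mem_union]
    rcases eq_none_or_eq_none hA hB e with h | h
    · simp [unionG_eq_right h, h]
    · simp [unionG_eq_left h, h]
  · refine Finset.disjoint_filter.mpr fun e _ hAe hBe => ?_
    rcases eq_none_or_eq_none hA hB e with h | h <;> simp_all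

theorem colCount_updEdge (he : G e = none) (c : Col) :
    colCount (updEdge G e (some κ)) c = colCount G c + if κ = c then 1 else 0 := by
  unfold colCount
  have hfilter : Finset.univ.filter (fun e' => updEdge G e (some κ) e' = some c) =
      if κ = c then insert e (Finset.univ.filter (fun e' => G e' = some c))
      else Finset.univ.filter (fun e' => G e' = some c) := by
    ext e'
    split_ifs with hκc <;>
      simp only [Finset.mem_insert, Finset.mem_filter, Finset.mem_univ, true_and] <;>
      by_cases he' : e' = e <;> simp [updEdge, he', he, hκc]
  rw [hfilter]
  split_ifs
  · rw [Finset.card_insert_of_notMem (by simp [he])]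
  · rfl

theorem colorIndex_unionG (hA : SupportedOn A Sᶜ) (hB : SupportedOn B S) :
    colorIndex (unionG A B) = colorIndex A + colorIndex B := by
  funext q
  by_cases hq : q ∈ S
  · have hAq : ∀ t, A s(t, q) = none := fun t =>
      hA.eq_none (Sym2.mem_mk_right t q) (not_not_intro hq)
    rw [Pi.add_apply, hA.colorIndex_eq_zero (not_not_intro hq), zero_add]
    exact colorIndex_congr_of_edges fun t => unionG_eq_right (hAq t)
  · have hBq : ∀ t, B s(t, q) = none := fun t => hB.eq_none (Sym2.mem_mk_right t q) hq
    rw [Pi.add_apply, hB.colorIndex_eq_zero hq, add_zero]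
    exact colorIndex_congr_of_edges fun t => unionG_eq_left (hBq t)

theorem colorIndex_updEdge_of_head (hne : p ≠ q) (he : G s(p, q) = none)
    (hq : κ.head p q = q) (hroot : colorIndex G q = 0) :
    colorIndex (updEdge G s(p, q) (some κ)) = colorIndex G + Pi.single q κ.sign := by
  set K := updEdge G s(p, q) (some κ)
  have hKpq : K s(p, q) = some κ := if_pos rfl
  have hK : ∀ e', e' ≠ s(p, q) → K e' = G e' := fun e' h => if_neg h
  have hpar : ColorParent K p q := colorParent_of_head_eq hne hKpq hq
  funext w
  rw [Pi.add_apply]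
  by_cases hwq : w = q
  · subst hwq
    rw [Pi.single_eq_same, hroot, zero_add]
    refine colorIndex_eq_sign hpar hKpq fun t ht => ?_
    by_contra htp
    have hedge := hK s(t, w) fun h => htp (Sym2.congr_left.mp h)
    exact colorIndex_eq_zero_iff.mp hroot t ((colorParent_congr hedge).mp ht)
  rw [Pi.single_eq_of_ne hwq, add_zero]
  by_cases hwp : w = p
  · subst hwp
    refine colorIndex_congr (fun t => ?_) fun t ht => hK _ ?_
    · by_cases htq : t = q
      · subst htq
        exact iff_of_false hpar.not_symm fun ht => ht.edge_ne_none (by rwa [Sym2.eq_swap])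
      · exact colorParent_congr (hK _ fun h => htq (Sym2.congr_left.mp (h.trans Sym2.eq_swap)))
    · rintro hteq
      exact ht.edge_ne_none (by rw [hteq, he])
  · exact colorIndex_congr_of_edges fun t => hK _ fun h => by
      rcases Sym2.mem_iff.mp (h ▸ Sym2.mem_mk_right t w) with h' | h'
      exacts [hwp h', hwq h']

theorem colorIndex_updEdge (hne : p ≠ q) (he : G s(p, q) = none)
    (hroot : colorIndex G (κ.head p q) = 0) :
    colorIndex (updEdge G s(p, q) (some κ)) = colorIndex G + Pi.single (κ.head p q) κ.sign := by
  rcases κ.head_eq_or p q with h | h <;> rw [h] at hroot ⊢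
  · rw [Sym2.eq_swap] at he ⊢
    exact colorIndex_updEdge_of_head hne.symm he (by rwa [Col.head_comm]) hroot
  · exact colorIndex_updEdge_of_head hne he h hroot

end Gluing

section SwapRight

variable {n : ℕ} {f f' g : Fin n → ℤ} {u v y r : Fin n} {κ : Col}

/-- `f'` arises from `f` by exchanging the entries at `u ≤ v`, the larger of the two moving
right; `u = v` allows `f' = f`. -/
def SwapRight (f f' : Fin n → ℤ) : Prop :=
  ∃ u v, u ≤ v ∧ f v ≤ f u ∧ f' = f ∘ Equiv.swap u v

theorem swapRight_self (f : Fin n → ℤ) (u : Fin n) : SwapRight f f :=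
  ⟨u, u, le_rfl, le_rfl, by simp⟩

theorem comp_swap_eq_self (h : f u = f v) : f ∘ Equiv.swap u v = f := by
  funext w
  simp only [Function.comp_apply, Equiv.swap_apply_def]
  split_ifs <;> simp_all

theorem SwapRight.eq_or_exists_lt (h : SwapRight f f') :
    f' = f ∨ ∃ u v, u < v ∧ f v < f u ∧ f' = f ∘ Equiv.swap u v := by
  obtain ⟨u, v, huv, hle, rfl⟩ := h
  by_cases hfuv : f u = f v
  · exact Or.inl (comp_swap_eq_self hfuv)
  · exact Or.inr ⟨u, v, lt_of_le_of_ne huv fun h => hfuv (h ▸ rfl), lt_of_le_of_ne hle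
      fun h => hfuv h.symm, rfl⟩

theorem SwapRight.rlexLt_or_eq (h : SwapRight f f') : RLexLt f f' ∨ f = f' := by
  obtain rfl | ⟨u, v, huv, hlt, rfl⟩ := h.eq_or_exists_lt
  · exact Or.inr rfl
  refine Or.inl ⟨v, by simpa using hlt, fun j hj => ?_⟩
  simp [Equiv.swap_apply_of_ne_of_ne (huv.trans hj).ne' hj.ne']

theorem SwapRight.card_filter_ne (h : SwapRight f f') (hlt : RLexLt f f') :
    (Finset.univ.filter fun i => f i ≠ f' i).card = 2 := by
  obtain rfl | ⟨u, v, huv, hfuv, rfl⟩ := h.eq_or_exists_lt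
  · obtain ⟨i, hi, -⟩ := hlt
    exact absurd hi (lt_irrefl _)
  have hset : (Finset.univ.filter fun i => f i ≠ (f ∘ Equiv.swap u v) i) = {u, v} := by
    ext w
    simp only [Finset.mem_filter, Finset.mem_univ, true_and, Finset.mem_insert,
      Finset.mem_singleton, Function.comp_apply]
    by_cases hwu : w = u
    · simp [hwu, hfuv.ne']
    by_cases hwv : w = v
    · simp [hwv, hfuv.ne]
    simp [Equiv.swap_apply_of_ne_of_ne hwu hwv, hwu, hwv]
  rw [hset, Finset.card_pair huv.ne]

theorem SwapRight.add_left (h : SwapRight f f') (hg : ∀ w, f w ≠ f' w → g w = 0) :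
    SwapRight (g + f) (g + f') := by
  obtain ⟨w, -⟩ := id h
  obtain rfl | ⟨u, v, huv, hlt, rfl⟩ := h.eq_or_exists_lt
  · exact swapRight_self _ w
  have hgu : g u = 0 := hg u (by simpa using hlt.ne')
  have hgv : g v = 0 := hg v (by simpa using hlt.ne)
  refine ⟨u, v, huv.le, by simpa [hgu, hgv] using hlt.le, ?_⟩
  funext w
  simp only [Pi.add_apply, Function.comp_apply, Equiv.swap_apply_def]
  split_ifs <;> simp_all

theorem swapRight_add_single (hy : g y = 0) (hr : g r = 0) (hry : r ≠ y) {a : ℤ}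
    (hdir : y < r ↔ 0 < a) : SwapRight (g + Pi.single y a) (g + Pi.single r a) := by
  have hswap : g + Pi.single r a = (g + Pi.single y a) ∘ Equiv.swap y r := by
    funext w
    simp only [Pi.add_apply, Function.comp_apply, Equiv.swap_apply_def, Pi.single_apply]
    split_ifs <;> simp_all
  rcases lt_or_gt_of_ne hry with hlt | hlt
  · refine ⟨r, y, hlt.le, ?_, by rw [hswap, Equiv.swap_comm]⟩
    simpa [Pi.single_apply, hy, hr, hry, hry.symm] using not_lt.mp (hdir.not.mp hlt.asymm)
  · refine ⟨y, r, hlt.le, ?_, hswap⟩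
    simpa [Pi.single_apply, hy, hr, hry, hry.symm] using (hdir.mp hlt).le

theorem swapRight_add_single_head (hy : g y = 0) (hr : g r = 0) (hry : r ≠ y) :
    SwapRight (g + Pi.single y κ.sign) (g + Pi.single (κ.head r y) κ.sign) := by
  rcases κ.head_eq_or r y with h | h <;> rw [h]
  · exact swapRight_add_single hy hr hry
      (Col.lt_iff_sign_pos hry.symm (by rw [Col.head_comm, h]))
  · exact swapRight_self _ y

end SwapRight

section Reroot

variable {n : ℕ} {f f' g : Fin n → ℤ} {S : Set (Fin n)} {x y r : Fin n} {κ : Col}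

theorem SwapRight.eq_comp_swap_of_roots (h : SwapRight f f')
    (hf : ∀ w, f w = 0 ↔ w ∉ S ∨ w = x) (hf' : ∀ w, f' w = 0 ↔ w ∉ S ∨ w = y)
    (hf1 : ∀ w, |f w| ≤ 1) (hxS : x ∈ S) (hyS : y ∈ S) (hxy : x ≠ y) :
    f' = f ∘ Equiv.swap x y ∧ ((x < y ∧ f y = -1) ∨ (y < x ∧ f y = 1)) := by
  have hfx : f x = 0 := (hf x).mpr (Or.inr rfl)
  have hsupp : ∀ w, f w ≠ 0 → w ∈ S := fun w hw => by
    by_contra hwS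
    exact hw ((hf w).mpr (Or.inl hwS))
  have hf'_zero : ∀ w ∈ S, f' w = 0 → w = y := fun w hw h0 =>
    ((hf' w).mp h0).resolve_left (not_not_intro hw)
  have hfy := abs_le.mp (hf1 y)
  obtain rfl | ⟨u, v, huv, hlt, rfl⟩ := h.eq_or_exists_lt
  · exact absurd (((hf y).mp ((hf' y).mpr (Or.inr rfl))).resolve_left (not_not_intro hyS))
      (Ne.symm hxy)
  have hxuv : x = u ∨ x = v := by
    by_contra hc
    rw [not_or] at hc
    refine hxy (hf'_zero x hxS ?_)
    simp [Equiv.swap_apply_of_ne_of_ne hc.1 hc.2, hfx]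
  rcases hxuv with rfl | rfl
  · obtain rfl : v = y :=
      hf'_zero v (hsupp v (hlt.trans_eq hfx).ne) (by simp [hfx])
    exact ⟨rfl, Or.inl ⟨huv, by omega⟩⟩
  · obtain rfl : u = y :=
      hf'_zero u (hsupp u (hfx ▸ hlt).ne') (by simp [hfx])
    exact ⟨by rw [Equiv.swap_comm], Or.inr ⟨huv, by omega⟩⟩

theorem swapRight_reroot (hxy : x ≠ y) (hrx : r ≠ x) (hry : r ≠ y) (hgx : g x = 0)
    (hgy : g y = 0) (hgr : g r = 0) (hfx : f x = 0) (hfr : f r = 0)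
    (hfy : (x < y ∧ f y = -1) ∨ (y < x ∧ f y = 1)) (hx : κ.head r x = x) :
    SwapRight (g + f + Pi.single x κ.sign)
      (g + f ∘ Equiv.swap x y + Pi.single (κ.head r y) κ.sign) := by
  set m := g + f ∘ Equiv.swap x y
  by_cases hfyκ : f y = κ.sign
  · have hF : g + f + Pi.single x κ.sign = m + Pi.single y κ.sign := by
      funext w
      simp only [m, Pi.add_apply, Function.comp_apply, Equiv.swap_apply_def, Pi.single_apply]
      split_ifs <;> simp_all
    rw [hF]
    refine swapRight_add_single_head ?_ ?_ hry
    · simp [m, hgy, hfx]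
    · simp [m, Equiv.swap_apply_of_ne_of_ne hrx hry, hgr, hfr]
  · -- An edge `y → r` together with `r → x` would force `f y = κ.sign`.
    have hy : κ.head r y = y := by
      refine (κ.head_eq_or r y).resolve_left fun h => hfyκ ?_
      have h1 := Col.lt_iff_sign_pos hrx hx
      have h2 := Col.lt_iff_sign_pos hry.symm (by rw [Col.head_comm, h])
      cases κ <;> simp only [Col.sign] at h1 h2 ⊢ <;> omega
    rw [hy]
    have hswap : m + Pi.single y κ.sign = (g + f + Pi.single x κ.sign) ∘ Equiv.swap x y := by
      funext w
      simp only [m, Pi.add_apply, Function.comp_apply, Equiv.swap_apply_def, Pi.single_apply]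
      split_ifs <;> simp_all
    rcases hfy with ⟨hlt, hfy⟩ | ⟨hlt, hfy⟩
    · refine ⟨x, y, hlt.le, ?_, hswap⟩
      cases κ <;> simp_all [Col.sign, hxy.symm]
    · refine ⟨y, x, hlt.le, ?_, by rw [hswap, Equiv.swap_comm]⟩
      cases κ <;> simp_all [Col.sign, hxy.symm]

theorem swapRight_reattach (h : SwapRight f f')
    (hf : ∀ w, f w = 0 ↔ w ∉ S ∨ w = x) (hf' : ∀ w, f' w = 0 ↔ w ∉ S ∨ w = y)
    (hf1 : ∀ w, |f w| ≤ 1) (hgS : ∀ w ∈ S, g w = 0) (hgr : g r = 0)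
    (hxS : x ∈ S) (hyS : y ∈ S) (hrS : r ∉ S) (hx : κ.head r x = x) :
    SwapRight (g + f + Pi.single x κ.sign) (g + f' + Pi.single (κ.head r y) κ.sign) := by
  have hrx : r ≠ x := fun h => hrS (h ▸ hxS)
  have hry : r ≠ y := fun h => hrS (h ▸ hyS)
  by_cases hxy : x = y
  · subst hxy
    rw [hx, add_right_comm g f, add_right_comm g f']
    refine h.add_left fun w hw => ?_
    have hwS : w ∈ S := by
      by_contra hwS
      exact hw (((hf w).mpr (Or.inl hwS)).trans ((hf' w).mpr (Or.inl hwS)).symm)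
    have hwx : w ≠ x := by
      rintro rfl
      exact hw (((hf w).mpr (Or.inr rfl)).trans ((hf' w).mpr (Or.inr rfl)).symm)
    simp [hgS w hwS, hwx]
  · obtain ⟨rfl, hfy⟩ := h.eq_comp_swap_of_roots hf hf' hf1 hxS hyS hxy
    exact swapRight_reroot hxy hrx hry (hgS x hxS) (hgS y hyS) hgr
      ((hf x).mpr (Or.inr rfl)) ((hf r).mpr (Or.inl hrS)) hfy hx

end Reroot

section Subtrees

variable {n : ℕ} {V : Set (Fin n)} {G K : TCGraph n} {r x y a b t : Fin n} {κ : Col}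

theorem ColorParent.mono (h : ColorParent K t y) (hle : ∀ e c, K e = some c → G e = some c) :
    ColorParent G t y := by
  rcases h with ⟨h1, h2⟩ | ⟨h1, h2⟩
  exacts [Or.inl ⟨h1, hle _ _ h2⟩, Or.inr ⟨h1, hle _ _ h2⟩]

theorem restrict_le (S : Set (Fin n)) : ∀ e c, restrict G S e = some c → G e = some c := by
  intro e c h
  unfold restrict at h
  split_ifs at h
  exact h

theorem restrict_pair (S : Set (Fin n)) :
    restrict G S s(a, b) = if a ∈ S ∧ b ∈ S then G s(a, b) else none := by
  simp only [restrict, Sym2.mem_iff, forall_eq_or_imp, forall_eq]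

theorem IsRoot.colorParent_of_edge (hr : IsRoot G r) (hrx : r ≠ x) (hκ : G s(r, x) = some κ) :
    ColorParent G r x :=
  (colorParent_or_colorParent hrx hκ).resolve_right
    (colorIndex_eq_zero_iff.mp (isRoot_iff_colorIndex_eq_zero.mp hr) x)

theorem patternFree_of_mem_gbarOn (hG : G ∈ GbarOn V) : PatternFree G := hG.2.2.2

theorem colorIndex_eq_zero_iff_of_mem_gbarOn (hG : G ∈ GbarOn V) (hr : IsRoot G r)
    (hrV : r ∈ V) (w : Fin n) : colorIndex G w = 0 ↔ w ∉ V ∨ w = r := by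
  refine ⟨fun h => ?_, ?_⟩
  · by_contra hc
    rw [not_or, not_not] at hc
    have hreach : (toSG G).Reachable r w :=
      (hG.2.2.1.connected.preconnected ⟨r, hrV⟩ ⟨w, hc.1⟩).map
        (SimpleGraph.Embedding.induce V).toHom
    obtain ⟨p, hp⟩ := hreach.exists_adj_dist_add_one (Ne.symm hc.2)
    exact colorIndex_eq_zero_iff.mp h p
      ((patternFree_of_mem_gbarOn hG).colorParent_of_parentIn hr hp)
  · rintro (hw | rfl)
    exacts [SupportedOn.colorIndex_eq_zero hG.2.1 hw, isRoot_iff_colorIndex_eq_zero.mp hr]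

theorem mem_compSet_self (G : TCGraph n) (r x : Fin n) : x ∈ compSet G r x :=
  SimpleGraph.Reachable.refl x

theorem root_notMem_compSet (hxr : x ≠ r) : r ∉ compSet G r x := by
  rintro ⟨w⟩
  cases w.reverse with
  | nil => exact hxr rfl
  | cons h _ => exact h.2.1 rfl

theorem isRoot_restrict_compSet (hG : PatternFree G) (hr : IsRoot G r) (hxr : x ≠ r)
    (hκ : G s(r, x) = some κ) : IsRoot (restrict G (compSet G r x)) x := by
  rw [isRoot_iff_colorIndex_eq_zero, colorIndex_eq_zero_iff]
  intro t ht
  have htS := (supportedOn_restrict G _).mem_of_colorParent ht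
  have htr : t = r :=
    hG.colorParent_unique (ht.mono (restrict_le _)) (hr.colorParent_of_edge hxr.symm hκ)
  exact root_notMem_compSet hxr (htr ▸ htS)

theorem edge_leaving_compSet_eq (hG : PatternFree G) (hr : IsRoot G r) (hxr : x ≠ r)
    (hκ : G s(r, x) = some κ) (hGs : restrict G (compSet G r x) ∈ GbarOn (compSet G r x))
    (hab : G s(a, b) ≠ none) (ha : a ∈ compSet G r x) (hb : b ∉ compSet G r x) :
    a = x ∧ b = r := by
  have har : a ≠ r := fun h => root_notMem_compSet hxr (h ▸ ha)
  have hbr : b = r := by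
    by_contra hbr
    exact hb (SimpleGraph.Reachable.trans ha
      (show (delV G r).Adj a b from ⟨⟨fun h => hb (h ▸ ha), hab⟩, har, hbr⟩).reachable)
  subst hbr
  refine ⟨?_, rfl⟩
  obtain ⟨c, hc⟩ := Option.ne_none_iff_exists'.mp hab
  have hba : ColorParent G b a := hr.colorParent_of_edge har.symm (by rwa [Sym2.eq_swap])
  by_contra hax
  have hzero := colorIndex_eq_zero_iff_of_mem_gbarOn hGs
    (isRoot_restrict_compSet hG hr hxr hκ) (mem_compSet_self G b x) a
  have hne : colorIndex (restrict G (compSet G b x)) a ≠ 0 := fun h0 =>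
    hax ((hzero.mp h0).resolve_left (not_not_intro ha))
  obtain ⟨t, ht⟩ := not_forall_not.mp (mt colorIndex_eq_zero_iff.mpr hne)
  have htb : t = b := hG.colorParent_unique (ht.mono (restrict_le _)) hba
  have htS := (supportedOn_restrict G _).mem_of_colorParent ht
  exact hb (htb ▸ htS)

theorem eq_updEdge_unionG_restrict_compSet (hG : PatternFree G) (hr : IsRoot G r)
    (hxr : x ≠ r) (hκ : G s(r, x) = some κ)
    (hGs : restrict G (compSet G r x) ∈ GbarOn (compSet G r x)) :
    G = updEdge (unionG (restrict G (compSet G r x)ᶜ) (restrict G (compSet G r x)))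
      s(r, x) (some κ) := by
  funext e
  induction e using Sym2.ind with
  | _ a b =>
    by_cases he : s(a, b) = s(r, x)
    · rw [he, hκ]
      exact (if_pos rfl).symm
    have hcross : ∀ {a b}, s(a, b) ≠ s(r, x) → a ∈ compSet G r x → b ∉ compSet G r x →
        G s(a, b) = none := fun he ha hb => by
      by_contra hab
      obtain ⟨rfl, rfl⟩ := edge_leaving_compSet_eq hG hr hxr hκ hGs hab ha hb
      exact he Sym2.eq_swap
    simp only [updEdge, if_neg he, unionG, restrict_pair, Set.mem_compl_iff]
    by_cases ha : a ∈ compSet G r x <;> by_cases hb : b ∈ compSet G r x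
    · simp [ha, hb]
    · simp [ha, hb, hcross he ha hb]
    · rw [Sym2.eq_swap] at he ⊢
      simp [ha, hb, hcross he hb ha]
    · cases G s(a, b) <;> simp [ha, hb]

end Subtrees

section Invariant

variable {n : ℕ} {V : Set (Fin n)} {G H H' : TCGraph n} {r x y : Fin n} {κ : Col}

def OpInvariant (G H : TCGraph n) : Prop :=
  (∀ c, colCount G c = colCount H c) ∧ SwapRight (colorIndex G) (colorIndex H)

theorem OpStep.mem_gbarOn (h : OpStep V G H) : G ∈ GbarOn V ∧ H ∈ GbarOn V := by
  cases h with
  | base _ _ _ _ _ hG hH => exact ⟨hG, hH⟩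
  | congr _ _ _ _ _ _ _ _ hG hH => exact ⟨hG, hH⟩

/-- Both sides are obtained from the tree `G₀ = G - e(y)` by adding an edge of color `κ` at
`y`, so the index changes at most by moving the entry `κ.sign` from `y` to the root. -/
theorem opInvariant_of_operatedFrom (hG : PatternFree G) (hne : G ≠ H)
    (hop : OperatedFrom G H r y) : OpInvariant G H := by
  obtain ⟨p, κ, hr, hyr, hpar, hκ, rfl⟩ := hop
  have hpy : ColorParent G p y := hG.colorParent_of_parentIn hr hpar
  set G₀ := updEdge G s(p, y) none
  have hG₀ : ∀ e c, G₀ e = some c → G e = some c := fun e c h => by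
    simp only [G₀, updEdge] at h
    split_ifs at h
    exact h
  have hG₀py : G₀ s(p, y) = none := if_pos rfl
  have hG_eq : G = updEdge G₀ s(p, y) (some κ) := by
    funext e
    simp only [G₀, updEdge]
    split_ifs with h <;> simp [h, hκ]
  have hpr : p ≠ r := by
    rintro rfl
    exact hne hG_eq
  have hG₀ry : G₀ s(r, y) = none := by
    have hGry : G s(r, y) = none := by
      by_contra h
      obtain ⟨c, hc⟩ := Option.ne_none_iff_exists'.mp h
      exact hpr (hG.colorParent_unique hpy (hr.colorParent_of_edge (Ne.symm hyr) hc))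
    simp only [G₀, updEdge]
    split_ifs
    exacts [rfl, hGry]
  have hy₀ : colorIndex G₀ y = 0 := colorIndex_eq_zero_iff.mpr fun t ht => by
    have htp : t = p := hG.colorParent_unique (ht.mono hG₀) hpy
    exact ht.edge_ne_none (htp ▸ hG₀py)
  have hr₀ : colorIndex G₀ r = 0 := colorIndex_eq_zero_iff.mpr fun t ht =>
    colorIndex_eq_zero_iff.mp (isRoot_iff_colorIndex_eq_zero.mp hr) t (ht.mono hG₀)
  have hhead : κ.head p y = y := hpy.head_eq hκ
  refine ⟨fun c => ?_, ?_⟩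
  · conv_lhs => rw [hG_eq]
    rw [colCount_updEdge hG₀py, colCount_updEdge hG₀ry]
  · have hF : colorIndex G = colorIndex G₀ + Pi.single y κ.sign := by
      conv_lhs => rw [hG_eq]
      rw [colorIndex_updEdge hpy.ne hG₀py (by rw [hhead]; exact hy₀), hhead]
    have hH : colorIndex (updEdge G₀ s(r, y) (some κ)) =
        colorIndex G₀ + Pi.single (κ.head r y) κ.sign := by
      refine colorIndex_updEdge (Ne.symm hyr) hG₀ry ?_
      rcases κ.head_eq_or r y with h | h <;> rw [h]
      exacts [hr₀, hy₀]
    rw [hF, hH]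
    exact swapRight_add_single_head hy₀ hr₀ (Ne.symm hyr)

/-- Both sides are obtained by hanging a tree on the vertex set `S` of the branch at `x`
from the root, by an edge of color `κ`: `G(x)` at `x` and `H'` at its root `y`. -/
theorem opInvariant_of_reattach (hG : G ∈ GbarOn V) (hr : IsRoot G r) (hκ : G s(r, x) = some κ)
    (hsub : OpStep (compSet G r x) (restrict G (compSet G r x)) H') (hH' : IsRoot H' y)
    (hyS : y ∈ compSet G r x) (ih : OpInvariant (restrict G (compSet G r x)) H') :
    OpInvariant G (updEdge (unionG (restrict G (compSet G r x)ᶜ) H') s(r, y) (some κ)) := by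
  set S := compSet G r x
  obtain ⟨hGs, hH'S⟩ := hsub.mem_gbarOn
  have hxr : x ≠ r := by
    rintro rfl
    exact Option.some_ne_none κ (hκ.symm.trans (hG.1 x))
  have hxS : x ∈ S := mem_compSet_self G r x
  have hrS : r ∉ S := root_notMem_compSet hxr
  have hpf := patternFree_of_mem_gbarOn hG
  have hxroot := isRoot_restrict_compSet hpf hr hxr hκ
  have hdecomp := eq_updEdge_unionG_restrict_compSet hpf hr hxr hκ hGs
  have hc : SupportedOn (restrict G Sᶜ) Sᶜ := supportedOn_restrict G Sᶜ
  have hs : SupportedOn (restrict G S) S := supportedOn_restrict G S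
  have hH'sup : SupportedOn H' S := hH'S.2.1
  have hnone : ∀ {B : TCGraph n} {z : Fin n}, SupportedOn B S → z ∈ S →
      unionG (restrict G Sᶜ) B s(r, z) = none := fun hB hz => by
    rw [unionG_eq_right (hc.eq_none (Sym2.mem_mk_right r _) (not_not_intro hz))]
    exact hB.eq_none (Sym2.mem_mk_left _ _) hrS
  have hgS : ∀ w ∈ S, colorIndex (restrict G Sᶜ) w = 0 := fun w hw =>
    hc.colorIndex_eq_zero (not_not_intro hw)
  have hgr : colorIndex (restrict G Sᶜ) r = 0 := colorIndex_eq_zero_iff.mpr fun t ht =>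
    colorIndex_eq_zero_iff.mp (isRoot_iff_colorIndex_eq_zero.mp hr) t (ht.mono (restrict_le _))
  refine ⟨fun c => ?_, ?_⟩
  · conv_lhs => rw [hdecomp]
    rw [colCount_updEdge (hnone hs hxS), colCount_updEdge (hnone hH'sup hyS),
      colCount_unionG hc hs, colCount_unionG hc hH'sup, ih.1 c]
  · have hhead : κ.head r x = x := (hr.colorParent_of_edge hxr.symm hκ).head_eq hκ
    have hF : colorIndex G =
        colorIndex (restrict G Sᶜ) + colorIndex (restrict G S) + Pi.single x κ.sign := by
      conv_lhs => rw [hdecomp]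
      rw [colorIndex_updEdge hxr.symm (hnone hs hxS), colorIndex_unionG hc hs, hhead]
      rw [hhead, colorIndex_unionG hc hs, Pi.add_apply, hgS x hxS,
        isRoot_iff_colorIndex_eq_zero.mp hxroot, add_zero]
    have hH : colorIndex (updEdge (unionG (restrict G Sᶜ) H') s(r, y) (some κ)) =
        colorIndex (restrict G Sᶜ) + colorIndex H' + Pi.single (κ.head r y) κ.sign := by
      have hry : r ≠ y := fun h => hrS (h ▸ hyS)
      rw [colorIndex_updEdge hry (hnone hH'sup hyS), colorIndex_unionG hc hH'sup]
      rw [colorIndex_unionG hc hH'sup, Pi.add_apply]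
      rcases κ.head_eq_or r y with h | h <;> rw [h]
      · rw [hgr, hH'sup.colorIndex_eq_zero hrS, add_zero]
      · rw [hgS y hyS, isRoot_iff_colorIndex_eq_zero.mp hH', add_zero]
    rw [hF, hH]
    exact swapRight_reattach ih.2 (colorIndex_eq_zero_iff_of_mem_gbarOn hGs hxroot hxS)
      (colorIndex_eq_zero_iff_of_mem_gbarOn hH'S hH' hyS) (abs_colorIndex_le_one _) hgS hgr
      hxS hyS hrS hhead

theorem OpStep.opInvariant (h : OpStep V G H) : OpInvariant G H := by
  induction h with
  | base _ _ _ _ _ hG _ hne hop =>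
    exact opInvariant_of_operatedFrom (patternFree_of_mem_gbarOn hG) hne hop
  | congr _ _ _ _ _ _ _ _ hG _ _ hr hκ hsub hH' hyS hH ih =>
    subst hH
    exact opInvariant_of_reattach hG hr hκ hsub hH' hyS ih

end Invariant

theorem stmt15 (n : ℕ) (G H : TCGraph n) (hG : G ∈ Gbar n) (hH : H ∈ Gbar n)
    (hstep : OpStep (Set.univ : Set (Fin n)) G H) (rG rH : Fin n)
    (hrG : IsRoot G rG) (hrH : IsRoot H rH) :
    (colCount G Col.red = colCount H Col.red ∧ colCount G Col.blue = colCount H Col.blue) ∧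
    (RLexLt (iota G rG) (iota H rH) ∨ iota G rG = iota H rH) ∧
    (RLexLt (iota G rG) (iota H rH) →
      (Finset.univ.filter (fun i : Fin n => iota G rG i ≠ iota H rH i)).card = 2) := by
  obtain ⟨hcount, hswap⟩ := hstep.opInvariant
  rw [iota_eq_colorIndex hG.2.2 hrG hG.2.1.connected,
    iota_eq_colorIndex hH.2.2 hrH hH.2.1.connected]
  exact ⟨⟨hcount _, hcount _⟩, hswap.rlexLt_or_eq, hswap.card_filter_ne⟩

end LiuPaper
end
end
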